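/- Let A = (Q, Σ, Δ, Q₀, F) be an NBA with Q₀ ≠ ∅, let B be a TDPA obtained from the unified construction for A, and let w : ℕ → Σ. If w ∈ L(A) then w ∈ L(B). -/
import Mathlib


/-! Core definitions: NBA, TDPA, ranked slices, and the unified
determinization construction. -/

universe u v

/-- A nondeterministic Büchi automaton over state type `Q` and alphabet `Alp`. -/
structure NBA (Q : Type u) (Alp : Type v) where
  delta : Q → Alp → Set Q
  Q0 : Set Q
  F : Set Q

namespace NBA

variable {Q : Type u} {Alp : Type v}

/-- `Δ(X, x)`: successors of a set of states. -/
def nextSet (A : NBA Q Alp) (X : Set Q) (x : Alp) : Set Q := ⋃ q ∈ X, A.delta q x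

/-- A run of the NBA on the word `w`. -/
def IsRun (A : NBA Q Alp) (w : ℕ → Alp) (q : ℕ → Q) : Prop :=
  q 0 ∈ A.Q0 ∧ ∀ i, q (i + 1) ∈ A.delta (q i) (w i)

/-- Acceptance: some run visits `F` infinitely often. -/
def Accepts (A : NBA Q Alp) (w : ℕ → Alp) : Prop :=
  ∃ q, A.IsRun w q ∧ ∀ N, ∃ i, N ≤ i ∧ q i ∈ A.F

end NBA

/-- A transition-based deterministic parity automaton. -/
structure TDPA (P : Type u) (Alp : Type v) where
  delta : P → Alp → P
  p0 : P
  c : P → Alp → ℕ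

namespace TDPA

variable {P : Type u} {Alp : Type v}

/-- The unique run of the TDPA on `w`. -/
def run (B : TDPA P Alp) (w : ℕ → Alp) : ℕ → P
  | 0 => B.p0
  | i + 1 => B.delta (B.run w i) (w i)

/-- Acceptance: the minimum priority occurring infinitely often on the run is even. -/
def Accepts (B : TDPA P Alp) (w : ℕ → Alp) : Prop :=
  ∃ m, (∀ N, ∃ i, N ≤ i ∧ B.c (B.run w i) (w i) = m) ∧
    (∀ m', (∀ N, ∃ i, N ≤ i ∧ B.c (B.run w i) (w i) = m') → m ≤ m') ∧ Even m

/-- Reachability from the initial state. -/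
def Reachable (B : TDPA P Alp) (p : P) : Prop :=
  ∃ l : List Alp, l.foldl B.delta B.p0 = p

end TDPA

/-- A (ranked) slice: a tuple `S 1, …, S n` of subsets of `Q` together with a
ranking function `rk`.  Only the values on `{1, …, n}` are relevant. -/
structure Slice (Q : Type u) where
  n : ℕ
  S : ℕ → Set Q
  rk : ℕ → ℕ

namespace Slice

variable {Q : Type u}

/-- A valid ranked slice: the sets are nonempty and pairwise disjoint, the ranking is a
bijection of `{1,…,n}` and the last set has rank `1`. -/
def Valid (s : Slice Q) : Prop :=
  (∀ i ∈ Set.Icc 1 s.n, (s.S i).Nonempty) ∧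
  (∀ i ∈ Set.Icc 1 s.n, ∀ j ∈ Set.Icc 1 s.n, i ≠ j → Disjoint (s.S i) (s.S j)) ∧
  Set.BijOn s.rk (Set.Icc 1 s.n) (Set.Icc 1 s.n) ∧
  (1 ≤ s.n → s.rk s.n = 1)

/-- `Q_t`: union of all sets of the slice. -/
def states (s : Slice Q) : Set Q := ⋃ i ∈ Set.Icc 1 s.n, s.S i

/-- `idx q`: the (unique) index of the set containing `q`. -/
noncomputable def idx (s : Slice Q) (q : Q) : ℕ :=
  sInf {i | 1 ≤ i ∧ i ≤ s.n ∧ q ∈ s.S i}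

end Slice

variable {Q : Type u} {Alp : Type v}

/-- `Δ_t(q, x)`: successors of `q` not reachable from a set strictly to the left. -/
noncomputable def dT (A : NBA Q Alp) (s : Slice Q) (q : Q) (x : Alp) : Set Q :=
  A.delta q x \ A.nextSet (⋃ i ∈ Set.Ico 1 (s.idx q), s.S i) x

/-- `Δ_t(X, x)` for a set `X`. -/
noncomputable def dTs (A : NBA Q Alp) (s : Slice Q) (X : Set Q) (x : Alp) : Set Q :=
  ⋃ q ∈ X, dT A s q x

/-- The sets `Ŝ_j` of the step stage: odd positions are left (accepting) children, even
positions right (non-accepting) children. -/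
noncomputable def hatS (A : NBA Q Alp) (s : Slice Q) (x : Alp) (j : ℕ) : Set Q :=
  if j % 2 = 1 then dTs A s (s.S ((j + 1) / 2)) x ∩ A.F
  else dTs A s (s.S (j / 2)) x \ A.F

/-- The ranking `α̂` of the step stage. -/
def hatRk (s : Slice Q) (j : ℕ) : ℕ :=
  if j % 2 = 1 then s.n + 1 else s.rk (j / 2)

/-- The prune stage: `xs 1 < … < xs nt` enumerates the indices of the nonempty sets
among `Ŝ_1, …, Ŝ_{2n}`, and `xs (nt+1) = 2n + 1`. -/
def IsPrune (A : NBA Q Alp) (s : Slice Q) (x : Alp) (nt : ℕ) (xs : ℕ → ℕ) : Prop :=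
  StrictMonoOn xs (Set.Icc 1 nt) ∧
  (∀ i ∈ Set.Icc 1 nt, xs i ∈ Set.Icc 1 (2 * s.n) ∧ (hatS A s x (xs i)).Nonempty) ∧
  (∀ j ∈ Set.Icc 1 (2 * s.n), (hatS A s x j).Nonempty → ∃ i ∈ Set.Icc 1 nt, xs i = j) ∧
  xs (nt + 1) = 2 * s.n + 1

/-- The ranking `α̃` after prune: `α̃ i = min {α̂ j | xs i ≤ j < xs (i+1)}`. -/
noncomputable def tildeRk (s : Slice Q) (xs : ℕ → ℕ) (i : ℕ) : ℕ :=
  sInf (hatRk s '' {j | xs i ≤ j ∧ j < xs (i + 1)})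

/-- The green ranks: ranks in the image of `α̃` that mark an empty set after step. -/
def greenSet (A : NBA Q Alp) (s : Slice Q) (x : Alp) (nt : ℕ) (xs : ℕ → ℕ) : Set ℕ :=
  {r | (∃ i ∈ Set.Icc 1 nt, tildeRk s xs i = r) ∧
    ∃ j ∈ Set.Icc 1 (2 * s.n), hatS A s x j = ∅ ∧ hatRk s j = r}

/-- The red ranks: ranks in the image of `α̂` but not of `α̃`. -/
def redSet (s : Slice Q) (nt : ℕ) (xs : ℕ → ℕ) : Set ℕ :=
  {r | (∃ j ∈ Set.Icc 1 (2 * s.n), hatRk s j = r) ∧ ¬ ∃ i ∈ Set.Icc 1 nt, tildeRk s xs i = r}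

open Classical in
/-- The dominating rank: the minimum of the active ranks `G ∪ R`, or `|Q| + 1` if there
is no active rank. -/
noncomputable def domRank (G R : Set ℕ) (card : ℕ) : ℕ :=
  if (G ∪ R).Nonempty then sInf (G ∪ R) else card + 1

/-- A partition of `{1,…,nt}` into consecutive intervals, described by its boundaries:
the `j`-th interval is `Icc (b (j-1) + 1) (b j)`. -/
def IsIntervalPartition (nt n' : ℕ) (b : ℕ → ℕ) : Prop :=
  b 0 = 0 ∧ b n' = nt ∧ StrictMonoOn b (Set.Icc 0 n')

/-- The merge constraints: intervals containing a rank `< k` are singletons, and an index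
carrying rank `k` is the maximum of its interval. -/
def MergeConstraints (n' : ℕ) (b : ℕ → ℕ) (aT : ℕ → ℕ) (k : ℕ) : Prop :=
  ∀ j ∈ Set.Icc 1 n', ∀ l ∈ Set.Icc (b (j - 1) + 1) (b j),
    (aT l < k → b j = b (j - 1) + 1) ∧ (aT l = k → l = b j)

/-- A full transition of the (unified) construction, via prune data `(nt, xs)` and the
merge partition `(n', b)`. -/
noncomputable def TransVia [Fintype Q] (A : NBA Q Alp) (s : Slice Q) (x : Alp)
    (s' : Slice Q) (pr : ℕ) (nt : ℕ) (xs : ℕ → ℕ) (n' : ℕ) (b : ℕ → ℕ) : Prop :=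
  IsPrune A s x nt xs ∧
  IsIntervalPartition nt n' b ∧
  MergeConstraints n' b (tildeRk s xs)
    (domRank (greenSet A s x nt xs) (redSet s nt xs) (Fintype.card Q)) ∧
  ((domRank (greenSet A s x nt xs) (redSet s nt xs) (Fintype.card Q) ∈ greenSet A s x nt xs ∧
      pr = 2 * domRank (greenSet A s x nt xs) (redSet s nt xs) (Fintype.card Q)) ∨
   (domRank (greenSet A s x nt xs) (redSet s nt xs) (Fintype.card Q) ∉ greenSet A s x nt xs ∧
      pr = 2 * domRank (greenSet A s x nt xs) (redSet s nt xs) (Fintype.card Q) - 1)) ∧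
  s'.n = n' ∧
  (∀ i ∈ Set.Icc 1 n', s'.S i = ⋃ j ∈ Set.Icc (b (i - 1) + 1) (b i), hatS A s x (xs j)) ∧
  s'.Valid ∧
  (∀ i ∈ Set.Icc 1 n', ∀ j ∈ Set.Icc 1 n',
    sInf (tildeRk s xs '' Set.Icc (b (i - 1) + 1) (b i)) <
      sInf (tildeRk s xs '' Set.Icc (b (j - 1) + 1) (b j)) → s'.rk i < s'.rk j)

/-- A transition of the unified construction (any valid merge partition). -/
noncomputable def UnifiedTrans [Fintype Q] (A : NBA Q Alp) (s : Slice Q) (x : Alp)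
    (s' : Slice Q) (pr : ℕ) : Prop :=
  ∃ nt xs n' b, TransVia A s x s' pr nt xs n' b

/-- A transition of the Muller-Schupp construction (merge partition into singletons). -/
noncomputable def MSTrans [Fintype Q] (A : NBA Q Alp) (s : Slice Q) (x : Alp)
    (s' : Slice Q) (pr : ℕ) : Prop :=
  ∃ nt xs, TransVia A s x s' pr nt xs nt id

/-- `B` is obtained from the unified construction for `A`. -/
noncomputable def ObtainedUnified [Fintype Q] (A : NBA Q Alp) (B : TDPA (Slice Q) Alp) : Prop :=
  B.p0.n = 1 ∧ B.p0.S 1 = A.Q0 ∧ B.p0.rk 1 = 1 ∧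
  ∀ p, B.Reachable p → ∀ x, UnifiedTrans A p x (B.delta p x) (B.c p x)

/-- `B` is obtained from the Muller-Schupp construction for `A`. -/
noncomputable def ObtainedMS [Fintype Q] (A : NBA Q Alp) (B : TDPA (Slice Q) Alp) : Prop :=
  B.p0.n = 1 ∧ B.p0.S 1 = A.Q0 ∧ B.p0.rk 1 = 1 ∧
  ∀ p, B.Reachable p → ∀ x, MSTrans A p x (B.delta p x) (B.c p x)


/-! ## Auxiliary infrastructure for the main theorem -/

theorem Slice.Valid.n_le_card {Q : Type u} [Fintype Q] {s : Slice Q} (h : s.Valid) :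
    s.n ≤ Fintype.card Q := by
  classical
  obtain ⟨hne, hdisj, -, -⟩ := h
  rcases Nat.eq_zero_or_pos s.n with h0 | hpos
  · simp [h0]
  · have hQne : Nonempty Q := ⟨(hne 1 ⟨le_refl 1, hpos⟩).choose⟩
    have key : ∀ i, ∃ q : Q, i ∈ Finset.Icc 1 s.n → q ∈ s.S i := by
      intro i
      by_cases hi : i ∈ Finset.Icc 1 s.n
      · obtain ⟨q, hq⟩ := hne i (by simpa [Set.mem_Icc, Finset.mem_Icc] using hi)
        exact ⟨q, fun _ => hq⟩
      · exact ⟨Classical.arbitrary Q, fun h => absurd h hi⟩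
    choose f hf using key
    have hcard : (Finset.Icc 1 s.n).card ≤ (Finset.univ : Finset Q).card := by
      refine Finset.card_le_card_of_injOn f (fun i _ => Finset.mem_univ _) ?_
      intro i hi j hj hij
      by_contra hne'
      have h1 : f i ∈ s.S i := hf i hi
      have h2 : f j ∈ s.S j := hf j hj
      have hd := hdisj i (by simpa [Set.mem_Icc, Finset.mem_Icc] using hi)
        j (by simpa [Set.mem_Icc, Finset.mem_Icc] using hj) hne'
      exact (Set.disjoint_left.mp hd h1) (hij ▸ h2)
    simpa [Nat.card_Icc] using hcard

theorem hatRk_le_of_valid {Q : Type u} {s : Slice Q} (hs : s.Valid) {j : ℕ}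
    (hj : j ∈ Set.Icc 1 (2 * s.n)) : hatRk s j ≤ s.n + 1 := by
  unfold hatRk
  split
  · exact le_refl _
  · next hodd =>
    have hj0 : j % 2 = 0 := by omega
    have hj2 : j / 2 ∈ Set.Icc 1 s.n := by
      obtain ⟨h1, h2⟩ := hj
      exact ⟨by omega, by omega⟩
    exact le_trans (hs.2.2.1.mapsTo hj2).2 (Nat.le_succ _)

theorem UnifiedTrans.pr_le {Q Alp : Type} [Fintype Q] {A : NBA Q Alp} {s s' : Slice Q}
    {x : Alp} {pr : ℕ} (hs : s.Valid) (h : UnifiedTrans A s x s' pr) :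
    pr ≤ 2 * Fintype.card Q + 2 := by
  obtain ⟨nt, xs, n', b, hprune, hpart, hmc, hpr, hrest⟩ := h
  have hncard : s.n ≤ Fintype.card Q := hs.n_le_card
  have hdom : domRank (greenSet A s x nt xs) (redSet s nt xs) (Fintype.card Q) ≤
      Fintype.card Q + 1 := by
    unfold domRank
    split
    · next hne =>
      obtain ⟨r, hr⟩ := hne
      refine le_trans (Nat.sInf_le hr) ?_
      have hrle : r ≤ s.n + 1 := by
        rcases hr with hg | hrr
        · obtain ⟨-, j, hj, -, hrkj⟩ := hg
          exact hrkj ▸ hatRk_le_of_valid hs hj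
        · obtain ⟨⟨j, hj, hrkj⟩, -⟩ := hrr
          exact hrkj ▸ hatRk_le_of_valid hs hj
      omega
    · exact le_refl _
  rcases hpr with ⟨-, hpr⟩ | ⟨-, hpr⟩ <;> omega

theorem exists_min_infinite {f : ℕ → ℕ} {M : ℕ} (hM : ∀ i, f i ≤ M) :
    ∃ m, (∀ N, ∃ i, N ≤ i ∧ f i = m) ∧
      (∀ m', (∀ N, ∃ i, N ≤ i ∧ f i = m') → m ≤ m') := by
  classical
  set S := {v | ∀ N, ∃ i, N ≤ i ∧ f i = v} with hSdef
  have hSne : S.Nonempty := by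
    by_contra hc
    push_neg at hc
    have h' : ∀ v, ∃ N, ∀ i, N ≤ i → f i ≠ v := by
      intro v
      have hv : v ∉ S := by rw [hc]; exact Set.notMem_empty v
      simp only [hSdef, Set.mem_setOf_eq, not_forall] at hv
      obtain ⟨N, hN⟩ := hv
      exact ⟨N, fun i hi hfi => hN ⟨i, hi, hfi⟩⟩
    choose N hN using h'
    set Nstar := (Finset.range (M + 1)).sup N with hNstar
    have hv : f Nstar ≤ M := hM Nstar
    have hle : N (f Nstar) ≤ Nstar :=
      Finset.le_sup (Finset.mem_range.mpr (by omega))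
    exact hN (f Nstar) Nstar hle rfl
  refine ⟨sInf S, Nat.sInf_mem hSne, fun m' hm' => Nat.sInf_le hm'⟩


/-! ## Step-level machinery -/

/-- Index of the merged interval containing `l`. -/
noncomputable def nodeOf (b : ℕ → ℕ) (l : ℕ) : ℕ := sInf {t | l ≤ b t}

/-- `α̌ t`: minimum of `α̃` over the `t`-th merge interval. -/
noncomputable def achk {Q : Type u} (s : Slice Q) (xs b : ℕ → ℕ) (t : ℕ) : ℕ :=
  sInf (tildeRk s xs '' Set.Icc (b (t - 1) + 1) (b t))

/-- Position of the (unique) set of rank `v`. -/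
noncomputable def mk {Q : Type u} (s : Slice Q) (v : ℕ) : ℕ :=
  sInf {p | 1 ≤ p ∧ p ≤ s.n ∧ s.rk p = v}

/-- The pruned index of a (nonempty) position `j`. -/
noncomputable def prIdx (nt : ℕ) (xs : ℕ → ℕ) (j : ℕ) : ℕ :=
  sInf {l | 1 ≤ l ∧ l ≤ nt ∧ xs l = j}

section StepLemmas

variable {Q Alp : Type} [Fintype Q] {A : NBA Q Alp} {x : Alp} {s s' : Slice Q}
  {pr nt n' : ℕ} {xs b : ℕ → ℕ}

theorem xs_lt_succ (hp : IsPrune A s x nt xs) {l : ℕ} (h1 : 1 ≤ l) (h2 : l ≤ nt) :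
    xs l < xs (l + 1) := by
  rcases eq_or_lt_of_le h2 with rfl | hlt
  · have := (hp.2.1 l ⟨h1, h2⟩).1
    rw [hp.2.2.2]
    simp only [Set.mem_Icc] at this
    omega
  · exact hp.1 ⟨h1, h2⟩ ⟨by omega, by omega⟩ (by omega)

theorem xs_mem (hp : IsPrune A s x nt xs) {l : ℕ} (h1 : 1 ≤ l) (h2 : l ≤ nt) :
    1 ≤ xs l ∧ xs l ≤ 2 * s.n ∧ (hatS A s x (xs l)).Nonempty := by
  have h := hp.2.1 l ⟨h1, h2⟩
  simp only [Set.mem_Icc] at h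
  exact ⟨h.1.1, h.1.2, h.2⟩

/-- Interior positions of a window are empty. -/
theorem window_empty (hp : IsPrune A s x nt xs) {l j : ℕ} (h1 : 1 ≤ l) (h2 : l ≤ nt)
    (hj1 : xs l < j) (hj2 : j < xs (l + 1)) : hatS A s x j = ∅ := by
  by_contra hne
  rw [← Ne, ← Set.nonempty_iff_ne_empty] at hne
  have hjb : j ∈ Set.Icc 1 (2 * s.n) := by
    have hb := (xs_mem hp h1 h2).1
    have hub : xs (l + 1) ≤ 2 * s.n + 1 := by
      rcases eq_or_lt_of_le h2 with rfl | hlt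
      · rw [hp.2.2.2]
      · have := (hp.2.1 (l + 1) ⟨by omega, by omega⟩).1
        simp only [Set.mem_Icc] at this
        omega
    exact ⟨by omega, by omega⟩
  obtain ⟨l', hl', hxl'⟩ := hp.2.2.1 j hjb hne
  simp only [Set.mem_Icc] at hl'
  have hgt : l < l' := by
    by_contra hle
    push_neg at hle
    have : xs l' ≤ xs l := by
      rcases eq_or_lt_of_le hle with rfl | hlt'
      · exact le_refl _
      · exact le_of_lt (hp.1 ⟨hl'.1, hl'.2⟩ ⟨h1, h2⟩ hlt')
    omega
  have : xs (l + 1) ≤ xs l' := by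
    rcases eq_or_lt_of_le (show l + 1 ≤ l' by omega) with heq | hlt'
    · rw [heq]
    · exact le_of_lt (hp.1 ⟨by omega, by omega⟩ ⟨hl'.1, hl'.2⟩ hlt')
  omega

theorem prIdx_spec (hp : IsPrune A s x nt xs) {j : ℕ} (hj : j ∈ Set.Icc 1 (2 * s.n))
    (hne : (hatS A s x j).Nonempty) :
    1 ≤ prIdx nt xs j ∧ prIdx nt xs j ≤ nt ∧ xs (prIdx nt xs j) = j := by
  obtain ⟨l, hl, hxl⟩ := hp.2.2.1 j hj hne
  simp only [Set.mem_Icc] at hl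
  have hmem : prIdx nt xs j ∈ {l | 1 ≤ l ∧ l ≤ nt ∧ xs l = j} :=
    Nat.sInf_mem ⟨l, hl.1, hl.2, hxl⟩
  exact hmem

theorem tildeRk_le_hatRk (hp : IsPrune A s x nt xs) {l j : ℕ} (h1 : 1 ≤ l) (h2 : l ≤ nt)
    (hj1 : xs l ≤ j) (hj2 : j < xs (l + 1)) : tildeRk s xs l ≤ hatRk s j :=
  Nat.sInf_le ⟨j, ⟨hj1, hj2⟩, rfl⟩

theorem tildeRk_mem (hp : IsPrune A s x nt xs) {l : ℕ} (h1 : 1 ≤ l) (h2 : l ≤ nt) :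
    ∃ j, xs l ≤ j ∧ j < xs (l + 1) ∧ tildeRk s xs l = hatRk s j := by
  have hne : (hatRk s '' {j | xs l ≤ j ∧ j < xs (l + 1)}).Nonempty :=
    ⟨hatRk s (xs l), ⟨xs l, ⟨le_refl _, xs_lt_succ hp h1 h2⟩, rfl⟩⟩
  obtain ⟨j, ⟨hj1, hj2⟩, hj3⟩ := Nat.sInf_mem hne
  exact ⟨j, hj1, hj2, hj3.symm⟩

theorem le_tildeRk (hp : IsPrune A s x nt xs) {l c : ℕ} (h1 : 1 ≤ l) (h2 : l ≤ nt)
    (h : ∀ j, xs l ≤ j → j < xs (l + 1) → c ≤ hatRk s j) : c ≤ tildeRk s xs l := by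
  obtain ⟨j, hj1, hj2, hj3⟩ := tildeRk_mem hp h1 h2
  rw [hj3]
  exact h j hj1 hj2

/-- Distinctness of `α̃` below `n + 1`. -/
theorem tildeRk_inj (hp : IsPrune A s x nt xs) (hs : s.Valid) {l l' : ℕ}
    (h1 : 1 ≤ l) (h2 : l ≤ nt) (h1' : 1 ≤ l') (h2' : l' ≤ nt)
    (heq : tildeRk s xs l = tildeRk s xs l') (hle : tildeRk s xs l ≤ s.n) : l = l' := by
  obtain ⟨j, hj1, hj2, hj3⟩ := tildeRk_mem hp h1 h2
  obtain ⟨j', hj1', hj2', hj3'⟩ := tildeRk_mem hp h1' h2'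
  -- j and j' are even positions with the same rank
  have hjodd : j % 2 ≠ 1 := by
    intro hodd
    rw [hj3] at hle
    unfold hatRk at hle
    rw [if_pos hodd] at hle
    omega
  have hjodd' : j' % 2 ≠ 1 := by
    intro hodd
    rw [heq, hj3'] at hle
    unfold hatRk at hle
    rw [if_pos hodd] at hle
    omega
  have hrkj : s.rk (j / 2) = s.rk (j' / 2) := by
    have e1 : hatRk s j = s.rk (j / 2) := by unfold hatRk; rw [if_neg hjodd]
    have e2 : hatRk s j' = s.rk (j' / 2) := by unfold hatRk; rw [if_neg hjodd']
    rw [← e1, ← e2, ← hj3, ← hj3', heq]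
  -- bounds for j, j'
  have hjb : 1 ≤ j ∧ j ≤ 2 * s.n := by
    have ha := (xs_mem hp h1 h2).1
    have hub : xs (l + 1) ≤ 2 * s.n + 1 := by
      rcases eq_or_lt_of_le h2 with rfl | hlt
      · rw [hp.2.2.2]
      · have := (hp.2.1 (l + 1) ⟨by omega, by omega⟩).1
        simp only [Set.mem_Icc] at this
        omega
    omega
  have hjb' : 1 ≤ j' ∧ j' ≤ 2 * s.n := by
    have ha := (xs_mem hp h1' h2').1
    have hub : xs (l' + 1) ≤ 2 * s.n + 1 := by
      rcases eq_or_lt_of_le h2' with rfl | hlt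
      · rw [hp.2.2.2]
      · have := (hp.2.1 (l' + 1) ⟨by omega, by omega⟩).1
        simp only [Set.mem_Icc] at this
        omega
    omega
  have hdiv : j / 2 = j' / 2 := by
    refine hs.2.2.1.injOn ?_ ?_ hrkj
    · exact Set.mem_Icc.mpr ⟨by omega, by omega⟩
    · exact Set.mem_Icc.mpr ⟨by omega, by omega⟩
  have hjeq : j = j' := by omega
  -- windows are disjoint
  by_contra hne
  rcases Nat.lt_or_ge l l' with hlt | hge
  · have : xs (l + 1) ≤ xs l' := by
      rcases eq_or_lt_of_le (show l + 1 ≤ l' by omega) with heq' | hlt'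
      · rw [heq']
      · exact le_of_lt (hp.1 ⟨by omega, by omega⟩ ⟨h1', h2'⟩ hlt')
    omega
  · have hlt : l' < l := by omega
    have : xs (l' + 1) ≤ xs l := by
      rcases eq_or_lt_of_le (show l' + 1 ≤ l by omega) with heq' | hlt'
      · rw [heq']
      · exact le_of_lt (hp.1 ⟨by omega, by omega⟩ ⟨h1, h2⟩ hlt')
    omega

end StepLemmas


section MergeLemmas

set_option linter.unusedSectionVars false
set_option linter.unusedVariables false

variable {Q Alp : Type} [Fintype Q] {A : NBA Q Alp} {x : Alp} {s s' : Slice Q}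
  {pr nt n' : ℕ} {xs b : ℕ → ℕ}

theorem b_mono (hpt : IsIntervalPartition nt n' b) {t t' : ℕ} (h : t ≤ t') (h' : t' ≤ n') :
    b t ≤ b t' := by
  rcases eq_or_lt_of_le h with rfl | hlt
  · exact le_refl _
  · exact le_of_lt (hpt.2.2 ⟨Nat.zero_le _, by omega⟩ ⟨Nat.zero_le _, h'⟩ hlt)

theorem b_lt (hpt : IsIntervalPartition nt n' b) {t : ℕ} (h1 : 1 ≤ t) (h2 : t ≤ n') :
    b (t - 1) < b t :=
  hpt.2.2 ⟨Nat.zero_le _, by omega⟩ ⟨Nat.zero_le _, h2⟩ (by omega)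

theorem nodeOf_spec (hpt : IsIntervalPartition nt n' b) {l : ℕ} (h1 : 1 ≤ l) (h2 : l ≤ nt) :
    1 ≤ nodeOf b l ∧ nodeOf b l ≤ n' ∧ b (nodeOf b l - 1) < l ∧ l ≤ b (nodeOf b l) := by
  have hmemn : n' ∈ {t | l ≤ b t} := by
    simp only [Set.mem_setOf_eq, hpt.2.1]
    exact h2
  have hmem : nodeOf b l ∈ {t | l ≤ b t} := Nat.sInf_mem ⟨n', hmemn⟩
  have hle : nodeOf b l ≤ n' := Nat.sInf_le hmemn
  have hpos : 1 ≤ nodeOf b l := by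
    by_contra h
    push_neg at h
    interval_cases h' : nodeOf b l
    · simp only [Set.mem_setOf_eq, hpt.1] at hmem
      omega
  refine ⟨hpos, hle, ?_, hmem⟩
  have hnm : nodeOf b l - 1 ∉ {t | l ≤ b t} :=
    Nat.notMem_of_lt_sInf (show nodeOf b l - 1 < nodeOf b l by omega)
  simp only [Set.mem_setOf_eq, not_le] at hnm
  exact hnm

theorem nodeOf_mono (hpt : IsIntervalPartition nt n' b) {l l' : ℕ} (h1 : 1 ≤ l) (h2 : l ≤ nt)
    (h1' : 1 ≤ l') (h2' : l' ≤ nt) (hll : l ≤ l') : nodeOf b l ≤ nodeOf b l' := by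
  have hspec := nodeOf_spec hpt h1' h2'
  exact Nat.sInf_le (show l ≤ b (nodeOf b l') from le_trans hll hspec.2.2.2)

theorem nodeOf_eq (hpt : IsIntervalPartition nt n' b) {t l : ℕ} (h1 : 1 ≤ t) (h2 : t ≤ n')
    (hl1 : b (t - 1) < l) (hl2 : l ≤ b t) : nodeOf b l = t := by
  have hmem : t ∈ {t' | l ≤ b t'} := hl2
  have hle : nodeOf b l ≤ t := Nat.sInf_le hmem
  have hin : nodeOf b l ∈ {t' | l ≤ b t'} := Nat.sInf_mem ⟨t, hmem⟩
  simp only [Set.mem_setOf_eq] at hin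
  by_contra hne
  have hlt : nodeOf b l < t := by omega
  have : b (nodeOf b l) ≤ b (t - 1) := b_mono hpt (by omega) (by omega)
  omega

theorem interval_mem_range (hpt : IsIntervalPartition nt n' b) {t l : ℕ} (h1 : 1 ≤ t)
    (h2 : t ≤ n') (hl1 : b (t - 1) + 1 ≤ l) (hl2 : l ≤ b t) : 1 ≤ l ∧ l ≤ nt := by
  have h0 : b 0 ≤ b (t - 1) := b_mono hpt (by omega) (by omega)
  have hn : b t ≤ b n' := b_mono hpt h2 (le_refl _)
  rw [hpt.1] at h0
  rw [hpt.2.1] at hn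
  omega

theorem achk_le (hpt : IsIntervalPartition nt n' b) {t l : ℕ} (h1 : 1 ≤ t) (h2 : t ≤ n')
    (hl1 : b (t - 1) + 1 ≤ l) (hl2 : l ≤ b t) : achk s xs b t ≤ tildeRk s xs l :=
  Nat.sInf_le ⟨l, Set.mem_Icc.mpr ⟨hl1, hl2⟩, rfl⟩

theorem achk_mem (hpt : IsIntervalPartition nt n' b) {t : ℕ} (h1 : 1 ≤ t) (h2 : t ≤ n') :
    ∃ l, b (t - 1) + 1 ≤ l ∧ l ≤ b t ∧ achk s xs b t = tildeRk s xs l := by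
  have hbl := b_lt hpt h1 h2
  have hne : (tildeRk s xs '' Set.Icc (b (t - 1) + 1) (b t)).Nonempty :=
    ⟨tildeRk s xs (b t), ⟨b t, Set.mem_Icc.mpr ⟨by omega, le_refl _⟩, rfl⟩⟩
  obtain ⟨l, hl, hl2⟩ := Nat.sInf_mem hne
  rw [Set.mem_Icc] at hl
  exact ⟨l, hl.1, hl.2, hl2.symm⟩

theorem le_achk (hpt : IsIntervalPartition nt n' b) {t c : ℕ} (h1 : 1 ≤ t) (h2 : t ≤ n')
    (h : ∀ l, b (t - 1) + 1 ≤ l → l ≤ b t → c ≤ tildeRk s xs l) : c ≤ achk s xs b t := by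
  obtain ⟨l, hl1, hl2, hl3⟩ := achk_mem (s := s) (xs := xs) hpt h1 h2
  rw [hl3]
  exact h l hl1 hl2

/-- `α̌` is injective below `s.n + 1`. -/
theorem achk_inj (hp : IsPrune A s x nt xs) (hpt : IsIntervalPartition nt n' b)
    (hs : s.Valid) {t t' : ℕ} (h1 : 1 ≤ t) (h2 : t ≤ n') (h1' : 1 ≤ t') (h2' : t' ≤ n')
    (heq : achk s xs b t = achk s xs b t') (hle : achk s xs b t ≤ s.n) : t = t' := by
  obtain ⟨l, hl1, hl2, hl3⟩ := achk_mem (s := s) (xs := xs) hpt h1 h2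
  obtain ⟨l', hl1', hl2', hl3'⟩ := achk_mem (s := s) (xs := xs) hpt h1' h2'
  have hr := interval_mem_range hpt h1 h2 hl1 hl2
  have hr' := interval_mem_range hpt h1' h2' hl1' hl2'
  have hleq : l = l' := by
    refine tildeRk_inj hp hs hr.1 hr.2 hr'.1 hr'.2 ?_ ?_
    · rw [← hl3, ← hl3', heq]
    · rw [← hl3]; exact hle
  have e1 := nodeOf_eq hpt h1 h2 (by omega) hl2
  have e2 := nodeOf_eq hpt h1' h2' (by omega) hl2'
  rw [← e1, ← e2, hleq]

/-- A merge interval containing an index of `α̃`-value `< K` is a singleton. -/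
theorem mc_singleton {K : ℕ} (hmc : MergeConstraints n' b (tildeRk s xs) K)
    {t l : ℕ} (h1 : 1 ≤ t) (h2 : t ≤ n') (hl1 : b (t - 1) + 1 ≤ l) (hl2 : l ≤ b t)
    (hlt : tildeRk s xs l < K) : b t = b (t - 1) + 1 ∧ l = b t := by
  have := (hmc t (Set.mem_Icc.mpr ⟨h1, h2⟩) l (Set.mem_Icc.mpr ⟨hl1, hl2⟩)).1 hlt
  exact ⟨this, by omega⟩

theorem card_rk_le_eq {Q' : Type u} {s' : Slice Q'} (hv : s'.Valid) {y : ℕ} (hy : y ≤ s'.n) :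
    ((Finset.Icc 1 s'.n).filter (fun t' => s'.rk t' ≤ y)).card = y := by
  classical
  have himg : ((Finset.Icc 1 s'.n).filter (fun t' => s'.rk t' ≤ y)).image s'.rk =
      Finset.Icc 1 y := by
    ext z
    simp only [Finset.mem_image, Finset.mem_filter, Finset.mem_Icc]
    constructor
    · rintro ⟨t', ⟨⟨ha1, ha2⟩, ha3⟩, rfl⟩
      have := hv.2.2.1.mapsTo (Set.mem_Icc.mpr ⟨ha1, ha2⟩)
      rw [Set.mem_Icc] at this
      exact ⟨this.1, ha3⟩
    · rintro ⟨h1, h2⟩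
      obtain ⟨t', ht', hrt'⟩ := hv.2.2.1.surjOn (Set.mem_Icc.mpr ⟨h1, le_trans h2 hy⟩)
      rw [Set.mem_Icc] at ht'
      exact ⟨t', ⟨⟨ht'.1, ht'.2⟩, by rw [hrt']; exact h2⟩, hrt'⟩
  have hinj : Set.InjOn s'.rk
      ((Finset.Icc 1 s'.n).filter (fun t' => s'.rk t' ≤ y) : Finset ℕ) := by
    intro a ha bb hb hab
    simp only [Finset.coe_filter, Set.mem_setOf_eq, Finset.mem_Icc] at ha hb
    exact hv.2.2.1.injOn (Set.mem_Icc.mpr ⟨ha.1.1, ha.1.2⟩)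
      (Set.mem_Icc.mpr ⟨hb.1.1, hb.1.2⟩) hab
  rw [← Finset.card_image_of_injOn hinj, himg, Nat.card_Icc]
  omega

/-- The counting sandwich for the normalized ranking. -/
theorem rk_sandwich (hT : TransVia A s x s' pr nt xs n' b) {t : ℕ}
    (h1 : 1 ≤ t) (h2 : t ≤ n') :
    1 + ((Finset.Icc 1 n').filter (fun t' => achk s xs b t' < achk s xs b t)).card ≤ s'.rk t ∧
    s'.rk t ≤ ((Finset.Icc 1 n').filter (fun t' => achk s xs b t' ≤ achk s xs b t)).card := by
  classical
  have hv : s'.Valid := hT.2.2.2.2.2.2.1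
  have hn' : s'.n = n' := hT.2.2.2.2.1
  have hcompat := hT.2.2.2.2.2.2.2
  have hrt : s'.rk t ∈ Set.Icc 1 s'.n :=
    hv.2.2.1.mapsTo (Set.mem_Icc.mpr ⟨h1, hn' ▸ h2⟩)
  rw [Set.mem_Icc] at hrt
  have hmono : ∀ t', t' ∈ Finset.Icc 1 n' → achk s xs b t' < achk s xs b t →
      s'.rk t' < s'.rk t := by
    intro t' ht' hlt
    rw [Finset.mem_Icc] at ht'
    exact hcompat t' (Set.mem_Icc.mpr ht') t (Set.mem_Icc.mpr ⟨h1, h2⟩) hlt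
  have hmono2 : ∀ t', t' ∈ Finset.Icc 1 n' → s'.rk t' ≤ s'.rk t →
      achk s xs b t' ≤ achk s xs b t := by
    intro t' ht' hle
    by_contra hgt
    push_neg at hgt
    rw [Finset.mem_Icc] at ht'
    have := hcompat t (Set.mem_Icc.mpr ⟨h1, h2⟩) t' (Set.mem_Icc.mpr ht') hgt
    omega
  constructor
  · have hsub : (Finset.Icc 1 n').filter (fun t' => achk s xs b t' < achk s xs b t) ⊆
        (Finset.Icc 1 n').filter (fun t' => s'.rk t' < s'.rk t) := by
      intro t' ht'
      rw [Finset.mem_filter] at ht' ⊢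
      exact ⟨ht'.1, hmono t' ht'.1 ht'.2⟩
    have hcard : ((Finset.Icc 1 n').filter (fun t' => s'.rk t' < s'.rk t)).card =
        s'.rk t - 1 := by
      have : ((Finset.Icc 1 n').filter (fun t' => s'.rk t' < s'.rk t)) =
          ((Finset.Icc 1 s'.n).filter (fun t' => s'.rk t' ≤ s'.rk t - 1)) := by
        rw [hn']
        apply Finset.filter_congr
        intro t' ht'
        rw [Finset.mem_Icc] at ht'
        have := hv.2.2.1.mapsTo (Set.mem_Icc.mpr (hn' ▸ ht'))
        rw [Set.mem_Icc] at this
        constructor <;> omega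
      rw [this, card_rk_le_eq hv (by omega)]
    have := Finset.card_le_card hsub
    omega
  · have hsub : (Finset.Icc 1 n').filter (fun t' => s'.rk t' ≤ s'.rk t) ⊆
        (Finset.Icc 1 n').filter (fun t' => achk s xs b t' ≤ achk s xs b t) := by
      intro t' ht'
      rw [Finset.mem_filter] at ht' ⊢
      exact ⟨ht'.1, hmono2 t' ht'.1 ht'.2⟩
    have hcard : ((Finset.Icc 1 n').filter (fun t' => s'.rk t' ≤ s'.rk t)).card = s'.rk t := by
      rw [show (Finset.Icc 1 n') = (Finset.Icc 1 s'.n) by rw [hn']]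
      exact card_rk_le_eq hv hrt.2
    have := Finset.card_le_card hsub
    omega

end MergeLemmas


section FrozenLemmas

set_option linter.unusedSectionVars false
set_option linter.unusedVariables false

variable {Q Alp : Type} [Fintype Q] {A : NBA Q Alp} {x : Alp} {s s' : Slice Q}
  {pr nt n' k : ℕ} {xs b : ℕ → ℕ}

/-- Abbreviation for the dominating rank of a transition. -/
noncomputable def domk (A : NBA Q Alp) [Fintype Q] (s : Slice Q) (x : Alp) (nt : ℕ)
    (xs : ℕ → ℕ) : ℕ :=
  domRank (greenSet A s x nt xs) (redSet s nt xs) (Fintype.card Q)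

theorem hatRk_ge_one (hs : s.Valid) {j : ℕ} (hj1 : 1 ≤ j) (hj2 : j ≤ 2 * s.n) :
    1 ≤ hatRk s j := by
  unfold hatRk
  split
  · omega
  · next hodd =>
    have hj2' : j / 2 ∈ Set.Icc 1 s.n := Set.mem_Icc.mpr ⟨by omega, by omega⟩
    exact (Set.mem_Icc.mp (hs.2.2.1.mapsTo hj2')).1

theorem xs_upper (hp : IsPrune A s x nt xs) {l : ℕ} (h1 : 1 ≤ l) (h2 : l ≤ nt) :
    xs (l + 1) ≤ 2 * s.n + 1 := by
  rcases eq_or_lt_of_le h2 with rfl | hlt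
  · rw [hp.2.2.2]
  · have := (hp.2.1 (l + 1) ⟨by omega, by omega⟩).1
    simp only [Set.mem_Icc] at this
    omega

theorem mk_spec (hs : s.Valid) {v : ℕ} (hv1 : 1 ≤ v) (hv2 : v ≤ s.n) :
    1 ≤ mk s v ∧ mk s v ≤ s.n ∧ s.rk (mk s v) = v := by
  obtain ⟨p, hp, hrp⟩ := hs.2.2.1.surjOn (Set.mem_Icc.mpr ⟨hv1, hv2⟩)
  rw [Set.mem_Icc] at hp
  have hne : {p | 1 ≤ p ∧ p ≤ s.n ∧ s.rk p = v}.Nonempty := ⟨p, hp.1, hp.2, hrp⟩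
  exact Nat.sInf_mem hne

theorem mk_unique (hs : s.Valid) {v p : ℕ} (hp1 : 1 ≤ p) (hp2 : p ≤ s.n)
    (hrp : s.rk p = v) : mk s v = p := by
  have hm := Set.mem_Icc.mp (hs.2.2.1.mapsTo (Set.mem_Icc.mpr ⟨hp1, hp2⟩))
  rw [hrp] at hm
  obtain ⟨hm1, hm2, hm3⟩ := mk_spec hs hm.1 hm.2
  exact hs.2.2.1.injOn (Set.mem_Icc.mpr ⟨hm1, hm2⟩) (Set.mem_Icc.mpr ⟨hp1, hp2⟩)
    (by rw [hm3, hrp])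

/-- If a set of rank `< k ≤ dom` exists, its non-accepting child is nonempty. -/
theorem frozen_alive (hT : TransVia A s x s' pr nt xs n' b) (hs : s.Valid)
    (hdom : k ≤ domk A s x nt xs) {p : ℕ} (hp1 : 1 ≤ p) (hp2 : p ≤ s.n)
    (hpk : s.rk p < k) : (hatS A s x (2 * p)).Nonempty := by
  classical
  by_contra hempty
  rw [Set.not_nonempty_iff_eq_empty] at hempty
  set v := s.rk p with hvdef
  have hjmem : 2 * p ∈ Set.Icc 1 (2 * s.n) := Set.mem_Icc.mpr ⟨by omega, by omega⟩
  have hhat : hatRk s (2 * p) = v := by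
    unfold hatRk
    rw [if_neg (by omega)]
    congr 1
    omega
  have hmem : v ∈ greenSet A s x nt xs ∪ redSet s nt xs := by
    by_cases himg : ∃ i ∈ Set.Icc 1 nt, tildeRk s xs i = v
    · exact Or.inl ⟨himg, 2 * p, hjmem, hempty, hhat⟩
    · exact Or.inr ⟨⟨2 * p, hjmem, hhat⟩, himg⟩
  have hne : (greenSet A s x nt xs ∪ redSet s nt xs).Nonempty := ⟨v, hmem⟩
  have : domk A s x nt xs ≤ v := by
    unfold domk domRank
    rw [if_pos hne]
    exact Nat.sInf_le hmem
  omega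

/-- Empty positions have step-rank at least `k`. -/
theorem empty_hatRk_ge (hT : TransVia A s x s' pr nt xs n' b) (hs : s.Valid)
    (hdom : k ≤ domk A s x nt xs) (hn2 : k - 1 ≤ s.n) {j : ℕ} (hj1 : 1 ≤ j)
    (hj2 : j ≤ 2 * s.n) (hemp : hatS A s x j = ∅) : k ≤ hatRk s j := by
  unfold hatRk
  split
  · omega
  · next hodd =>
    have hp1 : 1 ≤ j / 2 := by omega
    have hp2 : j / 2 ≤ s.n := by omega
    by_contra hlt
    push_neg at hlt
    have halive := frozen_alive hT hs hdom hp1 hp2 hlt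
    have : 2 * (j / 2) = j := by omega
    rw [this, hemp] at halive
    exact Set.not_nonempty_empty halive

/-- The pruned index of the non-accepting child of a frozen set carries its rank. -/
theorem frozen_tilde (hT : TransVia A s x s' pr nt xs n' b) (hs : s.Valid)
    (hdom : k ≤ domk A s x nt xs) (hn2 : k - 1 ≤ s.n) {p : ℕ} (hp1 : 1 ≤ p)
    (hp2 : p ≤ s.n) (hpk : s.rk p < k) :
    1 ≤ prIdx nt xs (2 * p) ∧ prIdx nt xs (2 * p) ≤ nt ∧ xs (prIdx nt xs (2 * p)) = 2 * p ∧
      tildeRk s xs (prIdx nt xs (2 * p)) = s.rk p := by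
  have hp := hT.1
  have halive := frozen_alive hT hs hdom hp1 hp2 hpk
  have hjmem : 2 * p ∈ Set.Icc 1 (2 * s.n) := Set.mem_Icc.mpr ⟨by omega, by omega⟩
  obtain ⟨hl1, hl2, hl3⟩ := prIdx_spec hp hjmem halive
  set l := prIdx nt xs (2 * p)
  have hhat : hatRk s (2 * p) = s.rk p := by
    unfold hatRk
    rw [if_neg (by omega)]
    congr 1
    omega
  refine ⟨hl1, hl2, hl3, le_antisymm ?_ ?_⟩
  · have := tildeRk_le_hatRk (j := 2 * p) hp hl1 hl2 (le_of_eq hl3)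
      (by rw [← hl3]; exact xs_lt_succ hp hl1 hl2)
    rw [hhat] at this
    exact this
  · refine le_tildeRk hp hl1 hl2 ?_
    intro j hj1 hj2
    rcases eq_or_lt_of_le hj1 with heq | hlt
    · rw [← heq, hl3, hhat]
    · have hub : xs (l + 1) ≤ 2 * s.n + 1 := xs_upper hp hl1 hl2
      have hjb : 1 ≤ j ∧ j ≤ 2 * s.n := by
        have := (xs_mem hp hl1 hl2).1
        omega
      have hemp := window_empty hp hl1 hl2 hlt hj2
      have := empty_hatRk_ge hT hs hdom hn2 hjb.1 hjb.2 hemp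
      omega

/-- The merged node of a frozen set: a singleton interval with `α̌` equal to its rank. -/
theorem frozen_achk (hT : TransVia A s x s' pr nt xs n' b) (hs : s.Valid)
    (hdom : k ≤ domk A s x nt xs) (hn2 : k - 1 ≤ s.n) {p : ℕ} (hp1 : 1 ≤ p)
    (hp2 : p ≤ s.n) (hpk : s.rk p < k) :
    1 ≤ nodeOf b (prIdx nt xs (2 * p)) ∧ nodeOf b (prIdx nt xs (2 * p)) ≤ n' ∧
      achk s xs b (nodeOf b (prIdx nt xs (2 * p))) = s.rk p ∧
      b (nodeOf b (prIdx nt xs (2 * p))) = b (nodeOf b (prIdx nt xs (2 * p)) - 1) + 1 ∧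
      prIdx nt xs (2 * p) = b (nodeOf b (prIdx nt xs (2 * p))) := by
  obtain ⟨hl1, hl2, hl3, hl4⟩ := frozen_tilde hT hs hdom hn2 hp1 hp2 hpk
  have hpt := hT.2.1
  have hmc := hT.2.2.1
  set l := prIdx nt xs (2 * p)
  obtain ⟨ht1, ht2, ht3, ht4⟩ := nodeOf_spec hpt hl1 hl2
  set t := nodeOf b l
  have hsing := mc_singleton (K := domk A s x nt xs) hmc ht1 ht2 (by omega) ht4
    (by rw [hl4]; omega)
  refine ⟨ht1, ht2, le_antisymm ?_ ?_, hsing.1, hsing.2⟩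
  · have := achk_le (s := s) (xs := xs) hpt ht1 ht2 (by omega) ht4
    rw [hl4] at this
    exact this
  · refine le_achk hpt ht1 ht2 ?_
    intro l' hl1' hl2'
    have : l' = l := by omega
    rw [this, hl4]

/-- Any node with `α̌ < k` realizes its `α̌`-value as the rank of some set. -/
theorem achk_lt_val (hT : TransVia A s x s' pr nt xs n' b) (hs : s.Valid)
    (hdom : k ≤ domk A s x nt xs) (hn2 : k - 1 ≤ s.n) {t : ℕ} (ht1 : 1 ≤ t) (ht2 : t ≤ n')
    (hach : achk s xs b t < k) :
    ∃ p, 1 ≤ p ∧ p ≤ s.n ∧ s.rk p = achk s xs b t := by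
  have hp := hT.1
  have hpt := hT.2.1
  obtain ⟨l, hl1, hl2, hl3⟩ := achk_mem (s := s) (xs := xs) hpt ht1 ht2
  have hr := interval_mem_range hpt ht1 ht2 hl1 hl2
  obtain ⟨j, hj1, hj2, hj3⟩ := tildeRk_mem hp hr.1 hr.2
  have hub : xs (l + 1) ≤ 2 * s.n + 1 := xs_upper hp hr.1 hr.2
  have hjb : 1 ≤ j ∧ j ≤ 2 * s.n := by
    have := (xs_mem hp hr.1 hr.2).1
    omega
  have hjne : (hatS A s x j).Nonempty := by
    rcases eq_or_lt_of_le hj1 with heq | hlt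
    · rw [← heq]; exact (xs_mem hp hr.1 hr.2).2.2
    · exfalso
      have hemp := window_empty hp hr.1 hr.2 hlt hj2
      have := empty_hatRk_ge hT hs hdom hn2 hjb.1 hjb.2 hemp
      rw [← hj3, ← hl3] at this
      omega
  have hjodd : j % 2 ≠ 1 := by
    intro hodd
    rw [hl3, hj3] at hach
    unfold hatRk at hach
    rw [if_pos hodd] at hach
    omega
  refine ⟨j / 2, by omega, by omega, ?_⟩
  rw [hl3, hj3]
  unfold hatRk
  rw [if_neg hjodd]

/-- The number of nodes with `α̌ < v` is exactly `v - 1`, for `1 ≤ v ≤ k`. -/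
theorem card_achk_lt (hT : TransVia A s x s' pr nt xs n' b) (hs : s.Valid)
    (hdom : k ≤ domk A s x nt xs) (hn2 : k - 1 ≤ s.n) {v : ℕ} (hv1 : 1 ≤ v) (hv2 : v ≤ k) :
    ((Finset.Icc 1 n').filter (fun t' => achk s xs b t' < v)).card = v - 1 := by
  classical
  have hp := hT.1
  have hpt := hT.2.1
  refine le_antisymm ?_ ?_
  · have hinj : Set.InjOn (achk s xs b)
        ((Finset.Icc 1 n').filter (fun t' => achk s xs b t' < v) : Finset ℕ) := by
      intro a ha a' ha' haa
      simp only [Finset.coe_filter, Set.mem_setOf_eq, Finset.mem_Icc] at ha ha'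
      refine achk_inj hp hpt hs ha.1.1 ha.1.2 ha'.1.1 ha'.1.2 haa ?_
      obtain ⟨q, hq1, hq2, hq3⟩ := achk_lt_val hT hs hdom hn2 ha.1.1 ha.1.2 (by omega)
      omega
    have hmaps : ∀ t' ∈ (Finset.Icc 1 n').filter (fun t' => achk s xs b t' < v),
        achk s xs b t' ∈ Finset.Icc 1 (v - 1) := by
      intro t' ht'
      simp only [Finset.mem_filter, Finset.mem_Icc] at ht' ⊢
      obtain ⟨q, hq1, hq2, hq3⟩ := achk_lt_val hT hs hdom hn2 ht'.1.1 ht'.1.2 (by omega)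
      have : 1 ≤ s.rk q := (Set.mem_Icc.mp (hs.2.2.1.mapsTo (Set.mem_Icc.mpr ⟨hq1, hq2⟩))).1
      omega
    have := Finset.card_le_card_of_injOn (achk s xs b) hmaps hinj
    rw [Nat.card_Icc] at this
    omega
  · have hmaps : ∀ u ∈ Finset.Icc 1 (v - 1),
        nodeOf b (prIdx nt xs (2 * mk s u)) ∈
          (Finset.Icc 1 n').filter (fun t' => achk s xs b t' < v) := by
      intro u hu
      rw [Finset.mem_Icc] at hu
      obtain ⟨hm1, hm2, hm3⟩ := mk_spec hs hu.1 (by omega)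
      obtain ⟨ht1, ht2, hach, -, -⟩ := frozen_achk hT hs hdom hn2 hm1 hm2 (by omega)
      simp only [Finset.mem_filter, Finset.mem_Icc]
      exact ⟨⟨ht1, ht2⟩, by rw [hach, hm3]; omega⟩
    have hinj : Set.InjOn (fun u => nodeOf b (prIdx nt xs (2 * mk s u)))
        (Finset.Icc 1 (v - 1) : Finset ℕ) := by
      intro u hu u' hu' huu
      simp only [Finset.coe_Icc, Set.mem_Icc] at hu hu'
      obtain ⟨hm1, hm2, hm3⟩ := mk_spec hs hu.1 (by omega)
      obtain ⟨hm1', hm2', hm3'⟩ := mk_spec hs hu'.1 (by omega)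
      obtain ⟨-, -, hach, -, -⟩ := frozen_achk hT hs hdom hn2 hm1 hm2 (by omega)
      obtain ⟨-, -, hach', -, -⟩ := frozen_achk hT hs hdom hn2 hm1' hm2' (by omega)
      simp only at huu
      rw [huu] at hach
      rw [hach'] at hach
      omega
    have := Finset.card_le_card_of_injOn _ hmaps hinj
    rw [Nat.card_Icc] at this
    omega

/-- Frozen sets keep exactly their rank after the transition. -/
theorem frozen_rk_eq (hT : TransVia A s x s' pr nt xs n' b) (hs : s.Valid)
    (hdom : k ≤ domk A s x nt xs) (hn2 : k - 1 ≤ s.n) {p : ℕ} (hp1 : 1 ≤ p)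
    (hp2 : p ≤ s.n) (hpk : s.rk p < k) :
    s'.rk (nodeOf b (prIdx nt xs (2 * p))) = s.rk p := by
  classical
  obtain ⟨ht1, ht2, hach, -, -⟩ := frozen_achk hT hs hdom hn2 hp1 hp2 hpk
  set t := nodeOf b (prIdx nt xs (2 * p))
  obtain ⟨hlow, hhigh⟩ := rk_sandwich hT ht1 ht2
  have hv1 : 1 ≤ s.rk p := (Set.mem_Icc.mp (hs.2.2.1.mapsTo (Set.mem_Icc.mpr ⟨hp1, hp2⟩))).1
  have hlt := card_achk_lt hT hs hdom hn2 (v := s.rk p) hv1 (by omega)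
  have hle : ((Finset.Icc 1 n').filter (fun t' => achk s xs b t' ≤ achk s xs b t)).card =
      s.rk p := by
    have : ((Finset.Icc 1 n').filter (fun t' => achk s xs b t' ≤ achk s xs b t)) =
        ((Finset.Icc 1 n').filter (fun t' => achk s xs b t' < s.rk p + 1)) := by
      apply Finset.filter_congr
      intro t' _
      rw [hach]
      constructor <;> omega
    rw [this, card_achk_lt hT hs hdom hn2 (by omega) (by omega)]
    omega
  rw [hach] at hlow
  rw [hlt] at hlow
  omega

/-- Nodes with `α̌ ≥ k` get rank at least `k`. -/
theorem achk_ge_rk_ge (hT : TransVia A s x s' pr nt xs n' b) (hs : s.Valid)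
    (hdom : k ≤ domk A s x nt xs) (hn2 : k - 1 ≤ s.n) {t : ℕ} (ht1 : 1 ≤ t) (ht2 : t ≤ n')
    (hach : k ≤ achk s xs b t) : k ≤ s'.rk t := by
  classical
  obtain ⟨hlow, -⟩ := rk_sandwich hT ht1 ht2
  have hsub : (Finset.Icc 1 n').filter (fun t' => achk s xs b t' < k) ⊆
      (Finset.Icc 1 n').filter (fun t' => achk s xs b t' < achk s xs b t) := by
    intro t' ht'
    simp only [Finset.mem_filter] at ht' ⊢
    exact ⟨ht'.1, by omega⟩
  have hcard := Finset.card_le_card hsub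
  rcases Nat.eq_zero_or_pos k with rfl | hk1
  · omega
  · rw [card_achk_lt hT hs hdom hn2 hk1 (le_refl k)] at hcard
    omega

/-- The rank bound: `rk' t ≤ α̌ t` whenever `α̌ t ≤ s.n`; one less under a red `k`. -/
theorem rk_le_achk (hT : TransVia A s x s' pr nt xs n' b) (hs : s.Valid)
    (hdom : k ≤ domk A s x nt xs) (hn2 : k - 1 ≤ s.n) {t : ℕ} (ht1 : 1 ≤ t) (ht2 : t ≤ n')
    (hach : achk s xs b t ≤ s.n) : s'.rk t ≤ achk s xs b t := by
  classical
  have hp := hT.1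
  have hpt := hT.2.1
  obtain ⟨-, hhigh⟩ := rk_sandwich hT ht1 ht2
  have hinj : Set.InjOn (achk s xs b)
      ((Finset.Icc 1 n').filter (fun t' => achk s xs b t' ≤ achk s xs b t) : Finset ℕ) := by
    intro a ha a' ha' haa
    simp only [Finset.coe_filter, Set.mem_setOf_eq, Finset.mem_Icc] at ha ha'
    exact achk_inj hp hpt hs ha.1.1 ha.1.2 ha'.1.1 ha'.1.2 haa (by omega)
  have hmaps : ∀ t' ∈ (Finset.Icc 1 n').filter (fun t' => achk s xs b t' ≤ achk s xs b t),
      achk s xs b t' ∈ Finset.Icc 1 (achk s xs b t) := by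
    intro t' ht'
    simp only [Finset.mem_filter, Finset.mem_Icc] at ht' ⊢
    refine ⟨?_, ht'.2⟩
    -- achk ≥ 1
    obtain ⟨l, hl1, hl2, hl3⟩ := achk_mem (s := s) (xs := xs) hpt ht'.1.1 ht'.1.2
    have hr := interval_mem_range hpt ht'.1.1 ht'.1.2 hl1 hl2
    obtain ⟨j, hj1, hj2, hj3⟩ := tildeRk_mem hp hr.1 hr.2
    have hub : xs (l + 1) ≤ 2 * s.n + 1 := xs_upper hp hr.1 hr.2
    have hjb : 1 ≤ j ∧ j ≤ 2 * s.n := by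
      have := (xs_mem hp hr.1 hr.2).1
      omega
    have := hatRk_ge_one hs hjb.1 hjb.2
    rw [hl3, hj3]
    omega
  have := Finset.card_le_card_of_injOn (achk s xs b) hmaps hinj
  rw [Nat.card_Icc] at this
  omega

/-- Under a red event at `k`, ranks of non-frozen nodes strictly drop below `α̌`. -/
theorem rk_lt_achk_red (hT : TransVia A s x s' pr nt xs n' b) (hs : s.Valid)
    (hdom : k ≤ domk A s x nt xs) (hn2 : k - 1 ≤ s.n) (hk1 : 1 ≤ k)
    (hred : ¬ ∃ l ∈ Set.Icc 1 nt, tildeRk s xs l = k) {t : ℕ} (ht1 : 1 ≤ t) (ht2 : t ≤ n')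
    (hach : achk s xs b t ≤ s.n) (hachk : k < achk s xs b t) :
    s'.rk t ≤ achk s xs b t - 1 := by
  classical
  have hp := hT.1
  have hpt := hT.2.1
  obtain ⟨-, hhigh⟩ := rk_sandwich hT ht1 ht2
  have hinj : Set.InjOn (achk s xs b)
      ((Finset.Icc 1 n').filter (fun t' => achk s xs b t' ≤ achk s xs b t) : Finset ℕ) := by
    intro a ha a' ha' haa
    simp only [Finset.coe_filter, Set.mem_setOf_eq, Finset.mem_Icc] at ha ha'
    exact achk_inj hp hpt hs ha.1.1 ha.1.2 ha'.1.1 ha'.1.2 haa (by omega)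
  have hmaps : ∀ t' ∈ (Finset.Icc 1 n').filter (fun t' => achk s xs b t' ≤ achk s xs b t),
      achk s xs b t' ∈ (Finset.Icc 1 (achk s xs b t)).erase k := by
    intro t' ht'
    simp only [Finset.mem_filter, Finset.mem_Icc, Finset.mem_erase] at ht' ⊢
    obtain ⟨l, hl1, hl2, hl3⟩ := achk_mem (s := s) (xs := xs) hpt ht'.1.1 ht'.1.2
    have hr := interval_mem_range hpt ht'.1.1 ht'.1.2 hl1 hl2
    refine ⟨?_, ?_, ht'.2⟩
    · intro heq
      exact hred ⟨l, Set.mem_Icc.mpr ⟨hr.1, hr.2⟩, by rw [← hl3, heq]⟩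
    · obtain ⟨j, hj1, hj2, hj3⟩ := tildeRk_mem hp hr.1 hr.2
      have hub : xs (l + 1) ≤ 2 * s.n + 1 := xs_upper hp hr.1 hr.2
      have hjb : 1 ≤ j ∧ j ≤ 2 * s.n := by
        have := (xs_mem hp hr.1 hr.2).1
        omega
      have := hatRk_ge_one hs hjb.1 hjb.2
      rw [hl3, hj3]
      omega
  have hce : ((Finset.Icc 1 (achk s xs b t)).erase k).card = achk s xs b t - 1 := by
    rw [Finset.card_erase_of_mem (Finset.mem_Icc.mpr ⟨by omega, by omega⟩), Nat.card_Icc]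
    omega
  have := Finset.card_le_card_of_injOn (achk s xs b) hmaps hinj
  rw [hce] at this
  omega

/-- A pruned index with `α̃` below the dominating rank forms a singleton node
with `α̌` equal to its `α̃`-value. -/
theorem tilde_singleton_node (hT : TransVia A s x s' pr nt xs n' b) {l : ℕ}
    (hl1 : 1 ≤ l) (hl2 : l ≤ nt) (hlt : tildeRk s xs l < domk A s x nt xs) :
    1 ≤ nodeOf b l ∧ nodeOf b l ≤ n' ∧ achk s xs b (nodeOf b l) = tildeRk s xs l := by
  have hpt := hT.2.1
  have hmc := hT.2.2.1
  obtain ⟨ht1, ht2, ht3, ht4⟩ := nodeOf_spec hpt hl1 hl2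
  set t := nodeOf b l
  have hsing := mc_singleton (K := domk A s x nt xs) hmc ht1 ht2 (by omega) ht4 hlt
  refine ⟨ht1, ht2, le_antisymm (achk_le (s := s) (xs := xs) hpt ht1 ht2 (by omega) ht4) ?_⟩
  refine le_achk hpt ht1 ht2 ?_
  intro l' hl1' hl2'
  have : l' = l := by omega
  rw [this]

/-- Growth of the slice width up to `k - 1`. -/
theorem slice_grow (hT : TransVia A s x s' pr nt xs n' b) (hs : s.Valid)
    (hdom : k ≤ domk A s x nt xs) (hn1 : 1 ≤ s.n) :
    min (s.n + 1) (k - 1) ≤ n' := by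
  classical
  have hp := hT.1
  have hpt := hT.2.1
  have hmc := hT.2.2.1
  rcases le_or_gt (k - 1) s.n with hge | hlt
  · rcases Nat.eq_zero_or_pos k with rfl | hk1
    · simp
    · have hcard := card_achk_lt hT hs hdom hge (v := k) hk1 (le_refl k)
      have hsub := Finset.filter_subset (fun t' => achk s xs b t' < k) (Finset.Icc 1 n')
      have := Finset.card_le_card hsub
      rw [hcard, Nat.card_Icc] at this
      omega
  · -- s.n < k - 1 : the red set is empty and the slice grows
    have hR : ∀ j, 1 ≤ j → j ≤ 2 * s.n → ∃ l, 1 ≤ l ∧ l ≤ nt ∧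
        tildeRk s xs l = hatRk s j := by
      intro j hj1 hj2
      by_contra hno
      push_neg at hno
      have hmem : hatRk s j ∈ greenSet A s x nt xs ∪ redSet s nt xs := by
        refine Or.inr ⟨⟨j, Set.mem_Icc.mpr ⟨hj1, hj2⟩, rfl⟩, ?_⟩
        rintro ⟨i, hi, hti⟩
        rw [Set.mem_Icc] at hi
        exact hno i hi.1 hi.2 hti
      have hne : (greenSet A s x nt xs ∪ redSet s nt xs).Nonempty := ⟨_, hmem⟩
      have hd : domk A s x nt xs ≤ hatRk s j := by
        unfold domk domRank
        rw [if_pos hne]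
        exact Nat.sInf_le hmem
      have := hatRk_le_of_valid hs (Set.mem_Icc.mpr ⟨hj1, hj2⟩)
      omega
    have hex : ∀ v, ∃ t, (1 ≤ v ∧ v ≤ s.n + 1) → (1 ≤ t ∧ t ≤ n' ∧ achk s xs b t = v) := by
      intro v
      by_cases hv : 1 ≤ v ∧ v ≤ s.n + 1
      · have hjex : ∃ j, 1 ≤ j ∧ j ≤ 2 * s.n ∧ hatRk s j = v := by
          rcases le_or_gt v s.n with hvn | hvn
          · obtain ⟨hm1, hm2, hm3⟩ := mk_spec hs hv.1 hvn
            refine ⟨2 * mk s v, by omega, by omega, ?_⟩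
            unfold hatRk
            rw [if_neg (by omega)]
            rw [show 2 * mk s v / 2 = mk s v by omega]
            exact hm3
          · refine ⟨1, le_refl 1, by omega, ?_⟩
            unfold hatRk
            rw [if_pos (by omega)]
            omega
        obtain ⟨j, hj1, hj2, hj3⟩ := hjex
        obtain ⟨l, hl1, hl2, hl3⟩ := hR j hj1 hj2
        have hvlt : tildeRk s xs l < domk A s x nt xs := by
          rw [hl3, hj3]
          omega
        obtain ⟨ht1, ht2, ht3⟩ := tilde_singleton_node hT hl1 hl2 hvlt
        exact ⟨nodeOf b l, fun _ => ⟨ht1, ht2, by rw [ht3, hl3, hj3]⟩⟩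
      · exact ⟨0, fun hcon => absurd hcon hv⟩
    choose g hg using hex
    have hmaps : ∀ v ∈ Finset.Icc 1 (s.n + 1), g v ∈ Finset.Icc 1 n' := by
      intro v hv
      rw [Finset.mem_Icc] at hv
      obtain ⟨h1, h2, h3⟩ := hg v hv
      exact Finset.mem_Icc.mpr ⟨h1, h2⟩
    have hinj : Set.InjOn g (Finset.Icc 1 (s.n + 1) : Finset ℕ) := by
      intro v hv v' hv' hvv
      simp only [Finset.coe_Icc, Set.mem_Icc] at hv hv'
      have h3 := (hg v hv).2.2
      have h3' := (hg v' hv').2.2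
      rw [hvv] at h3
      rw [h3'] at h3
      omega
    have := Finset.card_le_card_of_injOn g hmaps hinj
    rw [Nat.card_Icc, Nat.card_Icc] at this
    omega

end FrozenLemmas


section RunLemmas

set_option linter.unusedSectionVars false
set_option linter.unusedVariables false

variable {Q Alp : Type} [Fintype Q] {A : NBA Q Alp} {x : Alp} {s s' : Slice Q}
  {pr nt n' k : ℕ} {xs b : ℕ → ℕ}

theorem mem_nextSet_iff {X : Set Q} {q' : Q} :
    q' ∈ A.nextSet X x ↔ ∃ q ∈ X, q' ∈ A.delta q x := by
  unfold NBA.nextSet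
  simp [Set.mem_iUnion]

/-- One step of the accepting run: it lands in a hat-position `c` left of twice its host. -/
theorem run_step (hs : s.Valid) {q q' : Q} {h : ℕ} (hh1 : 1 ≤ h) (hh2 : h ≤ s.n)
    (hq : q ∈ s.S h) (hq' : q' ∈ A.delta q x) :
    ∃ j₀ c, 1 ≤ j₀ ∧ j₀ ≤ h ∧ 1 ≤ c ∧ c ≤ 2 * s.n ∧
      ((q' ∈ A.F ∧ c = 2 * j₀ - 1) ∨ (q' ∉ A.F ∧ c = 2 * j₀)) ∧ q' ∈ hatS A s x c := by
  classical
  set T := {j | 1 ≤ j ∧ j ≤ s.n ∧ q' ∈ A.nextSet (s.S j) x} with hTdef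
  have hhT : h ∈ T := ⟨hh1, hh2, mem_nextSet_iff.mpr ⟨q, hq, hq'⟩⟩
  set j₀ := sInf T with hj₀def
  have hj₀T : j₀ ∈ T := Nat.sInf_mem ⟨h, hhT⟩
  have hj₀h : j₀ ≤ h := Nat.sInf_le hhT
  obtain ⟨hj₀1, hj₀n, hj₀next⟩ := hj₀T
  obtain ⟨q₀, hq₀, hq₀'⟩ := mem_nextSet_iff.mp hj₀next
  have hdT : q' ∈ dT A s q₀ x := by
    have hidx : s.idx q₀ = j₀ := by
      have hj₀mem : j₀ ∈ {i | 1 ≤ i ∧ i ≤ s.n ∧ q₀ ∈ s.S i} := ⟨hj₀1, hj₀n, hq₀⟩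
      have hne : {i | 1 ≤ i ∧ i ≤ s.n ∧ q₀ ∈ s.S i}.Nonempty := ⟨j₀, hj₀mem⟩
      have hle : s.idx q₀ ≤ j₀ := Nat.sInf_le hj₀mem
      have hin := Nat.sInf_mem hne
      rcases eq_or_lt_of_le hle with heq | hlt
      · exact heq
      · exfalso
        obtain ⟨hi1, hi2, hi3⟩ := hin
        have : s.idx q₀ ∈ T := ⟨hi1, hi2, mem_nextSet_iff.mpr ⟨q₀, hi3, hq₀'⟩⟩
        have := Nat.sInf_le this
        omega
    refine ⟨hq₀', ?_⟩
    intro hcon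
    rw [hidx] at hcon
    obtain ⟨q₁, hq₁, hq₁'⟩ := mem_nextSet_iff.mp hcon
    simp only [Set.mem_iUnion] at hq₁
    obtain ⟨i, hi, hq₁mem⟩ := hq₁
    rw [Set.mem_Ico] at hi
    have : i ∈ T := ⟨hi.1, by omega, mem_nextSet_iff.mpr ⟨q₁, hq₁mem, hq₁'⟩⟩
    have := Nat.sInf_le this
    omega
  have hdTs : q' ∈ dTs A s (s.S j₀) x := by
    unfold dTs
    simp only [Set.mem_iUnion]
    exact ⟨q₀, hq₀, hdT⟩
  by_cases hF : q' ∈ A.F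
  · refine ⟨j₀, 2 * j₀ - 1, hj₀1, hj₀h, by omega, by omega, Or.inl ⟨hF, rfl⟩, ?_⟩
    unfold hatS
    rw [if_pos (by omega)]
    rw [show (2 * j₀ - 1 + 1) / 2 = j₀ by omega]
    exact ⟨hdTs, hF⟩
  · refine ⟨j₀, 2 * j₀, hj₀1, hj₀h, by omega, by omega, Or.inr ⟨hF, rfl⟩, ?_⟩
    unfold hatS
    rw [if_neg (by omega)]
    rw [show 2 * j₀ / 2 = j₀ by omega]
    exact ⟨hdTs, hF⟩

/-- The next host of the run is the node of the pruned index of `c`. -/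
theorem run_step_host (hT : TransVia A s x s' pr nt xs n' b) (hs : s.Valid) {q' : Q}
    {c : ℕ} (hc1 : 1 ≤ c) (hc2 : c ≤ 2 * s.n) (hq' : q' ∈ hatS A s x c) :
    1 ≤ prIdx nt xs c ∧ prIdx nt xs c ≤ nt ∧ xs (prIdx nt xs c) = c ∧
      1 ≤ nodeOf b (prIdx nt xs c) ∧ nodeOf b (prIdx nt xs c) ≤ n' ∧
      q' ∈ s'.S (nodeOf b (prIdx nt xs c)) := by
  have hp := hT.1
  have hpt := hT.2.1
  obtain ⟨hl1, hl2, hl3⟩ := prIdx_spec hp (Set.mem_Icc.mpr ⟨hc1, hc2⟩) ⟨q', hq'⟩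
  set l := prIdx nt xs c
  obtain ⟨ht1, ht2, ht3, ht4⟩ := nodeOf_spec hpt hl1 hl2
  set t := nodeOf b l
  refine ⟨hl1, hl2, hl3, ht1, ht2, ?_⟩
  have hS := hT.2.2.2.2.2.1 t (Set.mem_Icc.mpr ⟨ht1, ht2⟩)
  rw [hS]
  simp only [Set.mem_iUnion]
  exact ⟨l, Set.mem_Icc.mpr ⟨by omega, ht4⟩, by rw [hl3]; exact hq'⟩

theorem host_unique (hs : s.Valid) {q : Q} {h h' : ℕ} (hh1 : 1 ≤ h) (hh2 : h ≤ s.n)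
    (hh1' : 1 ≤ h') (hh2' : h' ≤ s.n) (hq : q ∈ s.S h) (hq' : q ∈ s.S h') : h = h' := by
  by_contra hne
  have hd := hs.2.1 h (Set.mem_Icc.mpr ⟨hh1, hh2⟩) h' (Set.mem_Icc.mpr ⟨hh1', hh2'⟩) hne
  exact (Set.disjoint_left.mp hd hq) hq'

end RunLemmas


section GammaLemmas

set_option linter.unusedSectionVars false
set_option linter.unusedVariables false

variable {Q Alp : Type} [Fintype Q] {A : NBA Q Alp} {x : Alp} {s s' : Slice Q}
  {pr nt n' k : ℕ} {xs b : ℕ → ℕ}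

/-- If some member of a merge interval has `α̃ ≥ k`, then the whole interval does. -/
theorem le_achk_of_member (hT : TransVia A s x s' pr nt xs n' b)
    (hdom : k ≤ domk A s x nt xs) {t l₀ : ℕ} (ht1 : 1 ≤ t) (ht2 : t ≤ n')
    (hm1 : b (t - 1) + 1 ≤ l₀) (hm2 : l₀ ≤ b t) (hl₀ : k ≤ tildeRk s xs l₀) :
    k ≤ achk s xs b t := by
  have hpt := hT.2.1
  have hmc := hT.2.2.1
  refine le_achk hpt ht1 ht2 ?_
  intro l' h1' h2'
  by_contra hlt
  push_neg at hlt
  have hsing := mc_singleton (K := domk A s x nt xs) hmc ht1 ht2 h1' h2'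
    (by omega)
  have heq : l' = l₀ := by omega
  rw [heq] at hlt
  omega

/-- If the head of the window of `c` has rank `≥ k`, the next host has rank `≥ k`. -/
theorem next_host_rk_ge (hT : TransVia A s x s' pr nt xs n' b) (hs : s.Valid)
    (hdom : k ≤ domk A s x nt xs) (hn2 : k - 1 ≤ s.n) {c : ℕ} (hc1 : 1 ≤ c)
    (hc2 : c ≤ 2 * s.n) (hcne : (hatS A s x c).Nonempty) (hheadk : k ≤ hatRk s c) :
    k ≤ s'.rk (nodeOf b (prIdx nt xs c)) := by
  have hp := hT.1
  have hpt := hT.2.1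
  obtain ⟨hl1, hl2, hl3⟩ := prIdx_spec hp (Set.mem_Icc.mpr ⟨hc1, hc2⟩) hcne
  set l := prIdx nt xs c
  have htilde : k ≤ tildeRk s xs l := by
    refine le_tildeRk hp hl1 hl2 ?_
    intro j hj1 hj2
    rcases eq_or_lt_of_le hj1 with heq | hlt
    · rw [← heq, hl3]; exact hheadk
    · have hub := xs_upper hp hl1 hl2
      have hjb : 1 ≤ j ∧ j ≤ 2 * s.n := by
        have := (xs_mem hp hl1 hl2).1
        omega
      exact empty_hatRk_ge hT hs hdom hn2 hjb.1 hjb.2 (window_empty hp hl1 hl2 hlt hj2)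
  obtain ⟨ht1, ht2, ht3, ht4⟩ := nodeOf_spec hpt hl1 hl2
  exact achk_ge_rk_ge hT hs hdom hn2 ht1 ht2
    (le_achk_of_member hT hdom ht1 ht2 (by omega) ht4 htilde)

/-- The frozen marker of `v` in the successor slice. -/
theorem mk_next (hT : TransVia A s x s' pr nt xs n' b) (hs : s.Valid)
    (hdom : k ≤ domk A s x nt xs) (hn2 : k - 1 ≤ s.n) {v : ℕ} (hv1 : 1 ≤ v) (hvk : v < k) :
    mk s' v = nodeOf b (prIdx nt xs (2 * mk s v)) := by
  obtain ⟨hm1, hm2, hm3⟩ := mk_spec hs hv1 (by omega)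
  have hrkeq := frozen_rk_eq hT hs hdom hn2 hm1 hm2 (by omega)
  obtain ⟨ht1, ht2, -, -, -⟩ := frozen_achk hT hs hdom hn2 hm1 hm2 (by omega)
  have hv : s'.Valid := hT.2.2.2.2.2.2.1
  have hn' : s'.n = n' := hT.2.2.2.2.1
  exact mk_unique hv ht1 (by omega) (by rw [hrkeq, hm3])

/-- Monotonicity: a hat-position left of twice a frozen marker lands left of its new marker. -/
theorem host_le_marker (hT : TransVia A s x s' pr nt xs n' b) (hs : s.Valid)
    (hdom : k ≤ domk A s x nt xs) (hn2 : k - 1 ≤ s.n) {v c : ℕ} (hv1 : 1 ≤ v) (hvk : v < k)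
    (hc1 : 1 ≤ c) (hc2 : c ≤ 2 * s.n) (hcne : (hatS A s x c).Nonempty)
    (hcm : c ≤ 2 * mk s v) : nodeOf b (prIdx nt xs c) ≤ mk s' v := by
  have hp := hT.1
  have hpt := hT.2.1
  obtain ⟨hm1, hm2, hm3⟩ := mk_spec hs hv1 (by omega)
  obtain ⟨hl1, hl2, hl3, hl4⟩ := frozen_tilde hT hs hdom hn2 hm1 hm2 (by omega)
  obtain ⟨hc1', hc2', hc3'⟩ := prIdx_spec hp (Set.mem_Icc.mpr ⟨hc1, hc2⟩) hcne
  rw [mk_next hT hs hdom hn2 hv1 hvk]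
  have hle : prIdx nt xs c ≤ prIdx nt xs (2 * mk s v) := by
    by_contra hgt
    push_neg at hgt
    have := hp.1 ⟨hl1, hl2⟩ ⟨hc1', hc2'⟩ hgt
    rw [hl3, hc3'] at this
    omega
  exact nodeOf_mono hpt hc1' hc2' hl1 hl2 hle

/-- The γ-descent step. -/
theorem gamma_step (hT : TransVia A s x s' pr nt xs n' b) (hs : s.Valid)
    (hdom : k ≤ domk A s x nt xs) (hn2 : k - 1 ≤ s.n) (hk1 : 1 ≤ k)
    {h j₀ c pstar : ℕ} (hh1 : 1 ≤ h) (hh2 : h ≤ s.n) (hj₀1 : 1 ≤ j₀) (hj₀h : j₀ ≤ h)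
    (hcor : c = 2 * j₀ - 1 ∨ c = 2 * j₀) (hc2 : c ≤ 2 * s.n)
    (hcne : (hatS A s x c).Nonempty)
    (hnof : ∀ p, j₀ ≤ p → p < h → k ≤ s.rk p)
    (hp1 : h ≤ pstar) (hp2 : pstar ≤ s.n)
    (hge : ∀ p, h ≤ p → p ≤ pstar → s.rk pstar ≤ s.rk p)
    (hrk : k ≤ s.rk pstar) :
    ∃ E', nodeOf b (prIdx nt xs c) ≤ E' ∧ 1 ≤ E' ∧ E' ≤ n' ∧
      (∀ t, nodeOf b (prIdx nt xs c) ≤ t → t ≤ E' → k ≤ s'.rk t) ∧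
      s'.rk E' ≤ s.rk pstar ∧
      ((¬ ∃ l ∈ Set.Icc 1 nt, tildeRk s xs l = k) → s'.rk E' ≤ s.rk pstar - 1) := by
  classical
  have hp := hT.1
  have hpt := hT.2.1
  have hc1 : 1 ≤ c := by omega
  obtain ⟨hlc1, hlc2, hlc3⟩ := prIdx_spec hp (Set.mem_Icc.mpr ⟨hc1, hc2⟩) hcne
  set lc := prIdx nt xs c with hlcdef
  have hrpn : s.rk pstar ≤ s.n :=
    (Set.mem_Icc.mp (hs.2.2.1.mapsTo (Set.mem_Icc.mpr ⟨by omega, hp2⟩))).2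
  have hcp : c ≤ 2 * pstar := by omega
  -- the owner: least l with 2 * pstar < xs (l + 1)
  have howT : nt ∈ {l | 1 ≤ l ∧ l ≤ nt ∧ 2 * pstar < xs (l + 1)} := by
    refine ⟨by omega, le_refl _, ?_⟩
    rw [hp.2.2.2]
    omega
  set ow := sInf {l | 1 ≤ l ∧ l ≤ nt ∧ 2 * pstar < xs (l + 1)} with howdef
  obtain ⟨how1, how2, how3⟩ := Nat.sInf_mem (⟨nt, howT⟩ :
    {l | 1 ≤ l ∧ l ≤ nt ∧ 2 * pstar < xs (l + 1)}.Nonempty)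
  rw [← howdef] at how1 how2 how3
  have howlc : lc ≤ ow := by
    by_contra hgt
    push_neg at hgt
    have : xs (ow + 1) ≤ xs lc := by
      rcases eq_or_lt_of_le (show ow + 1 ≤ lc by omega) with heq | hlt
      · rw [heq]
      · exact le_of_lt (hp.1 ⟨by omega, by omega⟩ ⟨hlc1, hlc2⟩ hlt)
    rw [hlc3] at this
    omega
  have howxs : xs ow ≤ 2 * pstar := by
    rcases eq_or_lt_of_le howlc with heq | hlt
    · rw [← heq, hlc3]
      omega
    · by_contra hgt
      push_neg at hgt
      have hmem : ow - 1 ∈ {l | 1 ≤ l ∧ l ≤ nt ∧ 2 * pstar < xs (l + 1)} := by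
        refine ⟨by omega, by omega, ?_⟩
        rw [show ow - 1 + 1 = ow by omega]
        exact hgt
      have hcon := Nat.sInf_le hmem
      rw [← howdef] at hcon
      omega
  -- KEY-A : all pruned indices in [lc, ow] have α̃ ≥ k
  have hkeyA : ∀ l, lc ≤ l → l ≤ ow → k ≤ tildeRk s xs l := by
    intro l hll hlo
    have hl1 : 1 ≤ l := by omega
    have hl2 : l ≤ nt := by omega
    refine le_tildeRk hp hl1 hl2 ?_
    intro j hj1 hj2
    rcases eq_or_lt_of_le hj1 with heq | hlt
    · -- head position
      rw [← heq]
      have hxsl1 : c ≤ xs l := by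
        rcases eq_or_lt_of_le hll with heq' | hlt'
        · rw [← heq', hlc3]
        · rw [← hlc3]
          exact le_of_lt (hp.1 ⟨hlc1, hlc2⟩ ⟨hl1, hl2⟩ hlt')
      have hxsl2 : xs l ≤ 2 * pstar := by
        rcases eq_or_lt_of_le hlo with heq' | hlt'
        · rw [heq']
          exact howxs
        · calc xs l ≤ xs ow := le_of_lt (hp.1 ⟨hl1, hl2⟩ ⟨by omega, by omega⟩ hlt')
          _ ≤ 2 * pstar := howxs
      unfold hatRk
      split
      · omega
      · next hodd =>
        have hpar1 : j₀ ≤ xs l / 2 := by omega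
        have hpar2 : xs l / 2 ≤ pstar := by omega
        rcases lt_or_ge (xs l / 2) h with hlth | hgeh
        · exact hnof _ hpar1 hlth
        · exact le_trans hrk (hge _ hgeh hpar2)
    · -- empty interior position
      have hub := xs_upper hp hl1 hl2
      have hjb : 1 ≤ j ∧ j ≤ 2 * s.n := by
        have := (xs_mem hp hl1 hl2).1
        omega
      exact empty_hatRk_ge hT hs hdom hn2 hjb.1 hjb.2 (window_empty hp hl1 hl2 hlt hj2)
  -- nodes
  obtain ⟨hE1, hE2, hE3, hE4⟩ := nodeOf_spec hpt (show 1 ≤ ow by omega) how2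
  set E' := nodeOf b ow with hE'def
  obtain ⟨hH1, hH2, hH3, hH4⟩ := nodeOf_spec hpt hlc1 hlc2
  have hHE : nodeOf b lc ≤ E' := nodeOf_mono hpt hlc1 hlc2 (by omega) how2 howlc
  -- KEY-C : α̌ ≥ k on [host', E']
  have hkeyC : ∀ t, nodeOf b lc ≤ t → t ≤ E' → k ≤ achk s xs b t := by
    intro t htl htu
    have ht1 : 1 ≤ t := by omega
    have ht2 : t ≤ n' := by omega
    -- find a member of the interval of t inside [lc, ow]
    have hm1 : b (t - 1) + 1 ≤ max (b (t - 1) + 1) lc := le_max_left _ _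
    have hm2 : max (b (t - 1) + 1) lc ≤ b t := by
      refine max_le ?_ ?_
      · have := b_lt hpt ht1 ht2
        omega
      · calc lc ≤ b (nodeOf b lc) := hH4
        _ ≤ b t := b_mono hpt htl ht2
    have hmlc : lc ≤ max (b (t - 1) + 1) lc := le_max_right _ _
    have hmow : max (b (t - 1) + 1) lc ≤ ow := by
      refine max_le ?_ howlc
      have : b (t - 1) ≤ b (E' - 1) := b_mono hpt (by omega) (by omega)
      omega
    exact le_achk_of_member hT hdom ht1 ht2 hm1 hm2 (hkeyA _ hmlc hmow)
  -- α̌ E' ≤ r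
  have hachE : achk s xs b E' ≤ s.rk pstar := by
    have hmem : b (E' - 1) + 1 ≤ ow ∧ ow ≤ b E' := ⟨by omega, hE4⟩
    calc achk s xs b E' ≤ tildeRk s xs ow := achk_le (s := s) (xs := xs) hpt (by omega) hE2 hmem.1 hmem.2
    _ ≤ hatRk s (2 * pstar) := tildeRk_le_hatRk hp (by omega) how2 howxs how3
    _ = s.rk pstar := by
        unfold hatRk
        rw [if_neg (by omega)]
        congr 1
        omega
  have hachEk : k ≤ achk s xs b E' := hkeyC E' hHE (le_refl _)
  refine ⟨E', hHE, by omega, hE2, ?_, ?_, ?_⟩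
  · intro t htl htu
    exact achk_ge_rk_ge hT hs hdom hn2 (by omega) (by omega) (hkeyC t htl htu)
  · exact le_trans (rk_le_achk hT hs hdom hn2 (by omega) hE2 (by omega)) hachE
  · intro hred
    have hne : achk s xs b E' ≠ k := by
      intro heq
      obtain ⟨l, hl1', hl2', hl3'⟩ := achk_mem (s := s) (xs := xs) hpt (by omega) hE2
      have hr := interval_mem_range hpt (by omega) hE2 hl1' hl2'
      exact hred ⟨l, Set.mem_Icc.mpr ⟨hr.1, hr.2⟩, by rw [← hl3', heq]⟩
    have := rk_lt_achk_red hT hs hdom hn2 hk1 hred (by omega) hE2 (by omega) (by omega)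
    omega

end GammaLemmas

/-- The core parity lemma: the minimal priority occurring infinitely often is even. -/
theorem core_min_priority_even {Q Alp : Type} [Fintype Q] (A : NBA Q Alp)
    (hQ0 : A.Q0.Nonempty) (B : TDPA (Slice Q) Alp) (hB : ObtainedUnified A B)
    (w : ℕ → Alp) (hw : A.Accepts w) (m : ℕ)
    (hm : ∀ N, ∃ i, N ≤ i ∧ B.c (B.run w i) (w i) = m)
    (hmin : ∀ m', (∀ N, ∃ i, N ≤ i ∧ B.c (B.run w i) (w i) = m') → m ≤ m') :
    Even m := by
  classical
  by_contra hodd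
  rw [Nat.not_even_iff_odd] at hodd
  obtain ⟨k0, hk0⟩ := hodd
  set k := k0 + 1 with hkdef
  -- basic setup
  have hreach : ∀ i, B.Reachable (B.run w i) := by
    intro i
    induction i with
    | zero => exact ⟨[], rfl⟩
    | succ i ih =>
      obtain ⟨l, hl⟩ := ih
      refine ⟨l ++ [w i], ?_⟩
      rw [List.foldl_append, hl]
      rfl
  have htU : ∀ i, UnifiedTrans A (B.run w i) (w i) (B.run w (i + 1)) (B.c (B.run w i) (w i)) :=
    fun i => hB.2.2.2 (B.run w i) (hreach i) (w i)
  choose NT XS NP BB hT using htU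
  have hvalid : ∀ i, (B.run w i).Valid := by
    intro i
    cases i with
    | zero =>
      obtain ⟨hn, hS, hrk, -⟩ := hB
      show B.p0.Valid
      refine ⟨?_, ?_, ?_, ?_⟩
      · intro i hi
        rw [hn] at hi
        simp only [Set.mem_Icc] at hi
        have : i = 1 := by omega
        rw [this, hS]
        exact hQ0
      · intro i hi j hj hij
        rw [hn] at hi hj
        simp only [Set.mem_Icc] at hi hj
        have hi1 : i = 1 := by omega
        have hj1 : j = 1 := by omega
        exact absurd (hi1.trans hj1.symm) hij
      · rw [hn]
        refine ⟨?_, ?_, ?_⟩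
        · intro y hy
          simp only [Set.mem_Icc] at hy
          have : y = 1 := by omega
          rw [this, hrk]
          exact Set.mem_Icc.mpr ⟨le_refl 1, le_refl 1⟩
        · intro y hy z hz _
          simp only [Set.mem_Icc] at hy hz
          have hy1 : y = 1 := by omega
          have hz1 : z = 1 := by omega
          rw [hy1, hz1]
        · intro y hy
          simp only [Set.mem_Icc] at hy
          have : y = 1 := by omega
          refine ⟨1, Set.mem_Icc.mpr ⟨le_refl 1, le_refl 1⟩, ?_⟩
          rw [hrk, this]
      · intro _
        rw [hn, hrk]
    | succ i => exact (hT i).2.2.2.2.2.2.1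
  have hnP : ∀ i, (B.run w (i + 1)).n = NP i := fun i => (hT i).2.2.2.2.1
  -- the accepting run and its host positions
  obtain ⟨ρ, hρrun, hρF⟩ := hw
  have hhostE : ∀ i, ∃ h, 1 ≤ h ∧ h ≤ (B.run w i).n ∧ ρ i ∈ (B.run w i).S h := by
    intro i
    induction i with
    | zero =>
      obtain ⟨hn, hS, -, -⟩ := hB
      refine ⟨1, le_refl 1, ?_, ?_⟩
      · show 1 ≤ B.p0.n
        rw [hn]
      · show ρ 0 ∈ B.p0.S 1
        rw [hS]
        exact hρrun.1
    | succ i ih =>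
      obtain ⟨h, hh1, hh2, hh3⟩ := ih
      obtain ⟨j₀, c, hj₀1, hj₀h, hc1, hc2, hcF, hcmem⟩ :=
        run_step (A := A) (x := w i) (hvalid i) hh1 hh2 hh3 (hρrun.2 i)
      obtain ⟨-, -, -, hnd1, hnd2, hndmem⟩ :=
        run_step_host (hT i) (hvalid i) hc1 hc2 hcmem
      exact ⟨_, hnd1, by rw [hnP i]; exact hnd2, hndmem⟩
  choose host hhost1 hhost2 hhost3 using hhostE
  have hstepE : ∀ i, ∃ j₀ c, 1 ≤ j₀ ∧ j₀ ≤ host i ∧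
      ((ρ (i + 1) ∈ A.F ∧ c = 2 * j₀ - 1) ∨ (ρ (i + 1) ∉ A.F ∧ c = 2 * j₀)) ∧
      1 ≤ c ∧ c ≤ 2 * (B.run w i).n ∧ ρ (i + 1) ∈ hatS A (B.run w i) (w i) c ∧
      host (i + 1) = nodeOf (BB i) (prIdx (NT i) (XS i) c) := by
    intro i
    obtain ⟨j₀, c, hj₀1, hj₀h, hc1, hc2, hcF, hcmem⟩ :=
      run_step (A := A) (x := w i) (hvalid i) (hhost1 i) (hhost2 i) (hhost3 i) (hρrun.2 i)
    obtain ⟨-, -, -, hnd1, hnd2, hndmem⟩ := run_step_host (hT i) (hvalid i) hc1 hc2 hcmem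
    refine ⟨j₀, c, hj₀1, hj₀h, hcF, hc1, hc2, hcmem, ?_⟩
    exact host_unique (hvalid (i + 1)) (hhost1 (i + 1)) (hhost2 (i + 1)) hnd1
      (by rw [hnP i]; exact hnd2) (hhost3 (i + 1)) hndmem
  choose J C hJ1 hJh hCF hC1 hC2 hCmem hHost using hstepE
  have hCor : ∀ i, C i = 2 * J i - 1 ∨ C i = 2 * J i := by
    intro i
    rcases hCF i with ⟨-, h⟩ | ⟨-, h⟩
    · exact Or.inl h
    · exact Or.inr h
  have hCle : ∀ i, C i ≤ 2 * host i := by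
    intro i
    have := hJh i
    rcases hCor i with h | h <;> omega
  have hn1 : ∀ i, 1 ≤ (B.run w i).n := fun i => le_trans (hhost1 i) (hhost2 i)
  -- eventually no priority below m
  have hfin : ∀ v, ∃ N, ∀ i, N ≤ i → v < m → B.c (B.run w i) (w i) ≠ v := by
    intro v
    by_cases hv : v < m
    · by_contra hno
      push_neg at hno
      have : ∀ N, ∃ i, N ≤ i ∧ B.c (B.run w i) (w i) = v := by
        intro N
        obtain ⟨i, hi1, -, hi3⟩ := hno N
        exact ⟨i, hi1, hi3⟩
      have := hmin v this
      omega
    · exact ⟨0, fun i _ hcon => absurd hcon hv⟩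
  choose Nv hNv using hfin
  set N₀ := (Finset.range m).sup Nv with hN₀def
  have hprm : ∀ i, N₀ ≤ i → m ≤ B.c (B.run w i) (w i) := by
    intro i hi
    by_contra hlt
    push_neg at hlt
    have hle : Nv (B.c (B.run w i) (w i)) ≤ N₀ :=
      Finset.le_sup (Finset.mem_range.mpr hlt)
    exact hNv (B.c (B.run w i) (w i)) i (by omega) hlt rfl
  -- the dominating rank is at least k after N₀
  have hdom : ∀ i, N₀ ≤ i → k ≤ domk A (B.run w i) (w i) (NT i) (XS i) := by
    intro i hi
    have hpr := (hT i).2.2.2.1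
    have hm := hprm i hi
    show k ≤ domRank (greenSet A (B.run w i) (w i) (NT i) (XS i))
      (redSet (B.run w i) (NT i) (XS i)) (Fintype.card Q)
    rcases hpr with ⟨-, hpr⟩ | ⟨-, hpr⟩ <;> omega
  -- eventually the slice has width at least k - 1
  have hgrow : ∀ j i, N₀ ≤ i → k - 1 ≤ (B.run w (i + j)).n ∨ 1 + j ≤ (B.run w (i + j)).n := by
    intro j
    induction j with
    | zero =>
      intro i hi
      exact Or.inr (by simpa using hn1 i)
    | succ j ih =>
      intro i hi
      have hstep := slice_grow (hT (i + j)) (hvalid (i + j)) (hdom (i + j) (by omega))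
        (hn1 (i + j))
      have hIH := ih i hi
      rw [← hnP (i + j)] at hstep
      have heq : i + (j + 1) = (i + j) + 1 := by omega
      rw [heq]
      rcases le_total ((B.run w (i + j)).n + 1) (k - 1) with hc | hc
      · rw [min_eq_left hc] at hstep
        omega
      · rw [min_eq_right hc] at hstep
        omega
  set N₁ := N₀ + k with hN₁def
  have hn2 : ∀ i, N₁ ≤ i → k - 1 ≤ (B.run w i).n := by
    intro i hi
    have hik : N₀ + k ≤ i := hi
    have := hgrow (i - N₀) N₀ (le_refl _)
    rw [show N₀ + (i - N₀) = i by omega] at this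
    rcases this with h | h <;> omega
  -- the wall-crossing counter
  set W : ℕ → ℕ := fun i =>
    ((Finset.Icc 1 (k - 1)).filter (fun v => mk (B.run w i) v < host i)).card with hWdef
  have hWsub : ∀ i, N₁ ≤ i →
      ((Finset.Icc 1 (k - 1)).filter (fun v => mk (B.run w (i + 1)) v < host (i + 1))) ⊆
      ((Finset.Icc 1 (k - 1)).filter (fun v => mk (B.run w i) v < host i)) := by
    intro i hi v hv
    simp only [Finset.mem_filter, Finset.mem_Icc] at hv ⊢
    refine ⟨hv.1, ?_⟩
    by_contra hge
    push_neg at hge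
    have hle := host_le_marker (hT i) (hvalid i) (hdom i (by omega)) (hn2 i hi)
      hv.1.1 (show v < k by omega) (hC1 i) (hC2 i) ⟨_, hCmem i⟩
      (le_trans (hCle i) (by omega))
    rw [← hHost i] at hle
    omega
  have hWanti : ∀ i, N₁ ≤ i → W (i + 1) ≤ W i := by
    intro i hi
    exact Finset.card_le_card (hWsub i hi)
  have hWcross : ∀ i, N₁ ≤ i → ∀ v, 1 ≤ v → v ≤ k - 1 →
      J i ≤ mk (B.run w i) v → mk (B.run w i) v < host i → W (i + 1) < W i := by
    intro i hi v hv1 hv2 hJm hmh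
    refine Finset.card_lt_card ((Finset.ssubset_iff_of_subset (hWsub i hi)).mpr ⟨v, ?_, ?_⟩)
    · simp only [Finset.mem_filter, Finset.mem_Icc]
      exact ⟨⟨hv1, hv2⟩, hmh⟩
    · simp only [Finset.mem_filter, Finset.mem_Icc, not_and, not_lt]
      intro _
      have hle := host_le_marker (hT i) (hvalid i) (hdom i (by omega)) (hn2 i hi)
        hv1 (show v < k by omega) (hC1 i) (hC2 i) ⟨_, hCmem i⟩
        (by have := hCor i; omega)
      rw [← hHost i] at hle
      exact hle
  -- W stabilizes
  -- W stabilizes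
  have hWmono : ∀ i j, N₁ ≤ i → i ≤ j → W j ≤ W i := by
    intro i j hi hij
    induction j with
    | zero =>
      have : i = 0 := by omega
      rw [this]
    | succ j ih =>
      rcases eq_or_lt_of_le hij with heq | hlt
      · rw [heq]
      · exact le_trans (hWanti j (by omega)) (ih (by omega))
  have hWstab : ∃ N₂, N₁ ≤ N₂ ∧ ∀ i, N₂ ≤ i → W i = W N₂ := by
    have hne : (Set.range (fun j => W (N₁ + j))).Nonempty := ⟨W (N₁ + 0), ⟨0, rfl⟩⟩
    obtain ⟨j₂, hj₂⟩ := Nat.sInf_mem hne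
    refine ⟨N₁ + j₂, by omega, ?_⟩
    intro i hi
    have h1 : W i ≤ W (N₁ + j₂) := hWmono (N₁ + j₂) i (by omega) hi
    have h2 : sInf (Set.range (fun j => W (N₁ + j))) ≤ W i := by
      refine Nat.sInf_le ⟨i - N₁, ?_⟩
      simp only
      rw [show N₁ + (i - N₁) = i by omega]
    have hj₂' : W (N₁ + j₂) = sInf (Set.range (fun j => W (N₁ + j))) := hj₂
    omega
  obtain ⟨N₂, hN₂1, hN₂2⟩ := hWstab
  -- after N₂ there is no frozen marker in [J i, host i)
  have hnofrozen : ∀ i, N₂ ≤ i → ∀ p, J i ≤ p → p < host i → k ≤ (B.run w i).rk p := by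
    intro i hi p hp1 hp2
    by_contra hlt
    push_neg at hlt
    have hpn : p ≤ (B.run w i).n := by
      have := hhost2 i
      omega
    have hp1' : 1 ≤ p := le_trans (hJ1 i) hp1
    have hrk1 : 1 ≤ (B.run w i).rk p :=
      (Set.mem_Icc.mp ((hvalid i).2.2.1.mapsTo (Set.mem_Icc.mpr ⟨hp1', hpn⟩))).1
    have hmkp : mk (B.run w i) ((B.run w i).rk p) = p := mk_unique (hvalid i) hp1' hpn rfl
    have hcross := hWcross i (by omega) ((B.run w i).rk p) hrk1 (by omega)
      (by rw [hmkp]; exact hp1) (by rw [hmkp]; exact hp2)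
    have he1 := hN₂2 i hi
    have he2 := hN₂2 (i + 1) (by omega)
    omega
  -- after some F-visit, the host rank stays ≥ k
  have hVa : ∀ i, N₁ ≤ i → ρ (i + 1) ∈ A.F → k ≤ (B.run w (i + 1)).rk (host (i + 1)) := by
    intro i hi hF
    have hcodd : C i = 2 * J i - 1 := by
      rcases hCF i with ⟨-, h⟩ | ⟨h, -⟩
      · exact h
      · exact absurd hF h
    have hhead : k ≤ hatRk (B.run w i) (C i) := by
      unfold hatRk
      rw [if_pos (by have := hJ1 i; omega)]
      have := hn2 i hi
      omega
    rw [hHost i]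
    exact next_host_rk_ge (hT i) (hvalid i) (hdom i (by omega)) (hn2 i hi)
      (hC1 i) (hC2 i) ⟨_, hCmem i⟩ hhead
  have hVb : ∀ i, N₂ ≤ i → k ≤ (B.run w i).rk (host i) →
      k ≤ (B.run w (i + 1)).rk (host (i + 1)) := by
    intro i hi hvk
    have hhead : k ≤ hatRk (B.run w i) (C i) := by
      unfold hatRk
      split
      · have := hn2 i (by omega)
        omega
      · next hodd =>
        have hCJ : C i = 2 * J i := by
          rcases hCor i with h | h
          · exfalso
            have := hJ1 i
            omega
          · exact h
        have : C i / 2 = J i := by omega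
        rw [this]
        rcases eq_or_lt_of_le (hJh i) with heq | hlt
        · rw [heq]; exact hvk
        · exact hnofrozen i hi (J i) (le_refl _) hlt
    rw [hHost i]
    exact next_host_rk_ge (hT i) (hvalid i) (hdom i (by omega)) (hn2 i (by omega))
      (hC1 i) (hC2 i) ⟨_, hCmem i⟩ hhead
  obtain ⟨i₁, hi₁1, hi₁2⟩ := hρF (N₂ + 1)
  set N₃ := i₁ with hN₃def
  have hN₃N₂ : N₂ + 1 ≤ N₃ := hi₁1
  have hvk : ∀ i, N₃ ≤ i → k ≤ (B.run w i).rk (host i) := by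
    intro i hi
    induction i with
    | zero => omega
    | succ i ih =>
      rcases eq_or_lt_of_le hi with heq | hlt
      · rw [heq] at hi₁2
        exact hVa i (by omega) hi₁2
      · exact hVb i (by omega) (ih (by omega))
  -- the γ quantity
  set gamS : ℕ → Set ℕ := fun i =>
    {r | k ≤ r ∧ ∃ e, host i ≤ e ∧ e ≤ (B.run w i).n ∧
      r = sInf ((B.run w i).rk '' Set.Icc (host i) e)} with hgamSdef
  set gam : ℕ → ℕ := fun i => sInf (gamS i) with hgamdef
  have hgamne : ∀ i, N₃ ≤ i → (gamS i).Nonempty := by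
    intro i hi
    refine ⟨(B.run w i).rk (host i), hvk i hi, host i, le_refl _, hhost2 i, ?_⟩
    rw [Set.Icc_self, Set.image_singleton, csInf_singleton]
  have hgammem : ∀ i, N₃ ≤ i → gam i ∈ gamS i := fun i hi => Nat.sInf_mem (hgamne i hi)
  -- the γ-descent
  have hgamstep : ∀ i, N₃ ≤ i → gam (i + 1) ≤ gam i ∧
      ((¬ ∃ l ∈ Set.Icc 1 (NT i), tildeRk (B.run w i) (XS i) l = k) →
        gam (i + 1) < gam i) := by
    intro i hi
    obtain ⟨hkr, e, he1, he2, hre⟩ := hgammem i hi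
    have himgne : ((B.run w i).rk '' Set.Icc (host i) e).Nonempty :=
      ⟨_, ⟨host i, Set.mem_Icc.mpr ⟨le_refl _, he1⟩, rfl⟩⟩
    have hgmem : gam i ∈ (B.run w i).rk '' Set.Icc (host i) e := by
      rw [hre]
      exact Nat.sInf_mem himgne
    obtain ⟨pstar, hpmem, hrp⟩ := hgmem
    rw [Set.mem_Icc] at hpmem
    have hge : ∀ p, host i ≤ p → p ≤ pstar → (B.run w i).rk pstar ≤ (B.run w i).rk p := by
      intro p h1 h2
      rw [hrp, hre]
      exact Nat.sInf_le ⟨p, Set.mem_Icc.mpr ⟨h1, by omega⟩, rfl⟩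
    obtain ⟨E', hE'1, hE'2, hE'3, hE'4, hE'5, hE'6⟩ :=
      gamma_step (hT i) (hvalid i) (hdom i (by omega)) (hn2 i (by omega)) (by omega)
        (hhost1 i) (hhost2 i) (hJ1 i) (hJh i) (hCor i) (hC2 i) ⟨_, hCmem i⟩
        (hnofrozen i (by omega)) hpmem.1 (by omega) hge (by rw [hrp]; exact hkr)
    rw [← hHost i] at hE'1 hE'4
    have hE'n : E' ≤ (B.run w (i + 1)).n := by rw [hnP i]; exact hE'3
    -- the new witness value
    set r' := sInf ((B.run w (i + 1)).rk '' Set.Icc (host (i + 1)) E') with hr'def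
    have himgne' : ((B.run w (i + 1)).rk '' Set.Icc (host (i + 1)) E').Nonempty :=
      ⟨_, ⟨host (i + 1), Set.mem_Icc.mpr ⟨le_refl _, hE'1⟩, rfl⟩⟩
    have hr'k : k ≤ r' := by
      refine le_csInf himgne' ?_
      rintro r'' ⟨t, ht, rfl⟩
      rw [Set.mem_Icc] at ht
      exact hE'4 t ht.1 ht.2
    have hr'mem : r' ∈ gamS (i + 1) := ⟨hr'k, E', hE'1, hE'n, rfl⟩
    have hgamle : gam (i + 1) ≤ r' := Nat.sInf_le hr'mem
    have hr'le : r' ≤ (B.run w (i + 1)).rk E' :=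
      Nat.sInf_le ⟨E', Set.mem_Icc.mpr ⟨hE'1, le_refl _⟩, rfl⟩
    constructor
    · calc gam (i + 1) ≤ r' := hgamle
      _ ≤ (B.run w (i + 1)).rk E' := hr'le
      _ ≤ (B.run w i).rk pstar := hE'5
      _ = gam i := hrp
    · intro hred
      have := hE'6 hred
      have hgi : 1 ≤ gam i := by omega
      calc gam (i + 1) ≤ (B.run w (i + 1)).rk E' := le_trans hgamle hr'le
      _ ≤ (B.run w i).rk pstar - 1 := this
      _ < gam i := by omega
  -- red events at k occur at every priority-m step after N₃
  have hred : ∀ i, N₃ ≤ i → B.c (B.run w i) (w i) = m →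
      ¬ ∃ l ∈ Set.Icc 1 (NT i), tildeRk (B.run w i) (XS i) l = k := by
    intro i hi hpri
    have hpr := (hT i).2.2.2.1
    have hdm := hdom i (by omega)
    have hdomeq : domRank (greenSet A (B.run w i) (w i) (NT i) (XS i))
        (redSet (B.run w i) (NT i) (XS i)) (Fintype.card Q) = k := by
      unfold domk at hdm
      rcases hpr with ⟨-, hpr⟩ | ⟨-, hpr⟩ <;> omega
    have hnotG : k ∉ greenSet A (B.run w i) (w i) (NT i) (XS i) := by
      rcases hpr with ⟨hG, hpr⟩ | ⟨hG, hpr⟩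
      · exfalso
        omega
      · rw [hdomeq] at hG
        exact hG
    by_cases hune : (greenSet A (B.run w i) (w i) (NT i) (XS i) ∪
        redSet (B.run w i) (NT i) (XS i)).Nonempty
    · have hkmem : k ∈ greenSet A (B.run w i) (w i) (NT i) (XS i) ∪
          redSet (B.run w i) (NT i) (XS i) := by
        have : domRank (greenSet A (B.run w i) (w i) (NT i) (XS i))
            (redSet (B.run w i) (NT i) (XS i)) (Fintype.card Q) ∈
            greenSet A (B.run w i) (w i) (NT i) (XS i) ∪
            redSet (B.run w i) (NT i) (XS i) := by
          unfold domRank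
          rw [if_pos hune]
          exact Nat.sInf_mem hune
        rw [hdomeq] at this
        exact this
      rcases hkmem with hG | hR
      · exact absurd hG hnotG
      · exact hR.2
    · exfalso
      have : domRank (greenSet A (B.run w i) (w i) (NT i) (XS i))
          (redSet (B.run w i) (NT i) (XS i)) (Fintype.card Q) = Fintype.card Q + 1 := by
        unfold domRank
        rw [if_neg hune]
      rw [hdomeq] at this
      have hv1 := hvk (i + 1) (by omega)
      have hv2 : (B.run w (i + 1)).rk (host (i + 1)) ≤ (B.run w (i + 1)).n :=
        (Set.mem_Icc.mp ((hvalid (i + 1)).2.2.1.mapsTo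
          (Set.mem_Icc.mpr ⟨hhost1 (i + 1), hhost2 (i + 1)⟩))).2
      have hv3 := (hvalid (i + 1)).n_le_card
      omega
  -- monotone chain of γ and the final descent
  have hgammono : ∀ i j, N₃ ≤ i → i ≤ j → gam j ≤ gam i := by
    intro i j hi hij
    induction j with
    | zero =>
      have : i = 0 := by omega
      rw [this]
    | succ j ih =>
      rcases eq_or_lt_of_le hij with heq | hlt
      · rw [heq]
      · exact le_trans ((hgamstep j (by omega)).1) (ih (by omega))
  have hdescent : ∀ d, ∃ i, N₃ ≤ i ∧ gam i + d ≤ gam N₃ := by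
    intro d
    induction d with
    | zero => exact ⟨N₃, le_refl _, by omega⟩
    | succ d ih =>
      obtain ⟨i, hi1, hi2⟩ := ih
      obtain ⟨i', hi'1, hi'2⟩ := hm (max i N₃)
      have hi'3 : N₃ ≤ i' := le_trans (le_max_right _ _) hi'1
      have hi'4 : i ≤ i' := le_trans (le_max_left _ _) hi'1
      have hlt := (hgamstep i' hi'3).2 (hred i' hi'3 hi'2)
      have hle := hgammono i i' hi1 hi'4
      exact ⟨i' + 1, by omega, by omega⟩
  obtain ⟨i, hi1, hi2⟩ := hdescent (gam N₃ + 1)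
  omega

/-- If `B` is obtained from the unified construction for `A` and
`w ∈ L(A)`, then `w ∈ L(B)`. -/
theorem nba_to_dpa {Q Alp : Type} [Fintype Q] (A : NBA Q Alp)
    (hQ0 : A.Q0.Nonempty) (B : TDPA (Slice Q) Alp) (hB : ObtainedUnified A B)
    (w : ℕ → Alp) (hw : A.Accepts w) : B.Accepts w := by
  classical
  have hreach : ∀ i, B.Reachable (B.run w i) := by
    intro i
    induction i with
    | zero => exact ⟨[], rfl⟩
    | succ i ih =>
      obtain ⟨l, hl⟩ := ih
      refine ⟨l ++ [w i], ?_⟩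
      rw [List.foldl_append, hl]
      rfl
  have ht : ∀ i, UnifiedTrans A (B.run w i) (w i) (B.run w (i + 1)) (B.c (B.run w i) (w i)) :=
    fun i => hB.2.2.2 (B.run w i) (hreach i) (w i)
  have hvalid : ∀ i, (B.run w i).Valid := by
    intro i
    cases i with
    | zero =>
      obtain ⟨hn, hS, hrk, -⟩ := hB
      show B.p0.Valid
      refine ⟨?_, ?_, ?_, ?_⟩
      · intro i hi
        rw [hn] at hi
        simp only [Set.mem_Icc] at hi
        have : i = 1 := by omega
        rw [this, hS]
        exact hQ0
      · intro i hi j hj hij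
        rw [hn] at hi hj
        simp only [Set.mem_Icc] at hi hj
        have hi1 : i = 1 := by omega
        have hj1 : j = 1 := by omega
        exact absurd (hi1.trans hj1.symm) hij
      · rw [hn]
        refine ⟨?_, ?_, ?_⟩
        · intro x hx
          simp only [Set.mem_Icc] at hx
          have : x = 1 := by omega
          rw [this, hrk]
          exact Set.mem_Icc.mpr ⟨le_refl 1, le_refl 1⟩
        · intro x hx y hy _
          simp only [Set.mem_Icc] at hx hy
          have hx1 : x = 1 := by omega
          have hy1 : y = 1 := by omega
          rw [hx1, hy1]
        · intro y hy
          simp only [Set.mem_Icc] at hy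
          have : y = 1 := by omega
          refine ⟨1, Set.mem_Icc.mpr ⟨le_refl 1, le_refl 1⟩, ?_⟩
          rw [hrk, this]
      · intro _
        rw [hn, hrk]
    | succ i =>
      obtain ⟨nt, xs, n', b, hT⟩ := ht i
      exact hT.2.2.2.2.2.2.1
  have hbound : ∀ i, B.c (B.run w i) (w i) ≤ 2 * Fintype.card Q + 2 :=
    fun i => (ht i).pr_le (hvalid i)
  obtain ⟨m, hminf, hmmin⟩ := exists_min_infinite hbound
  exact ⟨m, hminf, hmmin, core_min_priority_even A hQ0 B hB w hw m hminf hmmin⟩
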